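/- arXiv:1608.08529 — 6 statements merged into one kernel-verified Lean document; each statement's English description precedes it below -/
import Mathlib

section
/- Let f be a twice differentiable, strictly positive function on [a,b] with f'(a) > 0 and f'' ≥ 0, and assume in addition that log∘f is convex on [a,b]. Then for each n ∈ ℕ (n ≥ 1): (1 - f(a)/f(b))^{n+1} ≤ (n!/(n+1)^{n-1})·( ((f'(b))ⁿ/(f'(a))ⁿ)·log(f(b)/f(a)) - (b-a)·f'(a)/f(b) ). -/
/-!
Write `r = f b / f a`, `L = log r` and `t = 1 - r⁻¹`. Convexity of `log ∘ f` squeezes its chord slope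
`L / (b - a)` between the logarithmic derivatives `f' a / f a` and `f' b / f b`; hence `r ≤ f' b / f' a`,
`L > 0`, and `(b - a) f' a / f b ≤ L / r`. Since `t ≤ L`, we get `r ^ n = exp (n L) ≥ 1 + (n t) ^ n / n!`,
so the bracket on the right is at least `L (r ^ n - r⁻¹) ≥ t (n t) ^ n / n!`. The constant then leaves
`n ^ n / (n + 1) ^ (n - 1) · t ^ (n + 1)`, and `(n + 1) ^ (n - 1) ≤ n ^ n`.
-/

open Real Set

theorem Nat.add_two_pow_le_add_one_pow_succ (m : ℕ) : (m + 2) ^ m ≤ (m + 1) ^ (m + 1) := by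
  induction m with
  | zero => norm_num
  | succ m ih =>
    -- `(m + 3) (m + 1) ≤ (m + 2) ^ 2` carries the induction step.
    have key : (m + 3) ^ (m + 1) * (m + 1) ^ (m + 1) ≤ (m + 2) ^ (m + 2) * (m + 1) ^ (m + 1) :=
      calc (m + 3) ^ (m + 1) * (m + 1) ^ (m + 1) = ((m + 3) * (m + 1)) ^ (m + 1) := (mul_pow ..).symm
        _ ≤ ((m + 2) ^ 2) ^ (m + 1) := Nat.pow_le_pow_left (by nlinarith) _
        _ = (m + 2) ^ (m + 2) * (m + 2) ^ m := by rw [← pow_mul, ← pow_add]; ring_nf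
        _ ≤ (m + 2) ^ (m + 2) * (m + 1) ^ (m + 1) := Nat.mul_le_mul_left _ ih
    exact Nat.le_of_mul_le_mul_right key (by positivity)

theorem Real.add_one_pow_pred_le_pow {n : ℕ} (hn : n ≠ 0) : ((n : ℝ) + 1) ^ (n - 1) ≤ (n : ℝ) ^ n := by
  obtain ⟨m, rfl⟩ := Nat.exists_eq_succ_of_ne_zero hn
  have h : (((m + 2) ^ m : ℕ) : ℝ) ≤ ((m + 1) ^ (m + 1) : ℕ) :=
    Nat.cast_le.mpr (Nat.add_two_pow_le_add_one_pow_succ m)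
  push_cast at h
  simpa [add_assoc, one_add_one_eq_two] using h

theorem Real.one_add_pow_div_factorial_le_exp {x : ℝ} (hx : 0 ≤ x) {n : ℕ} (hn : n ≠ 0) :
    1 + x ^ n / n.factorial ≤ exp x := by
  have hsub : ({0, n} : Finset ℕ) ⊆ Finset.range (n + 1) := by
    simp [Finset.insert_subset_iff]
  calc 1 + x ^ n / n.factorial = ∑ i ∈ {0, n}, x ^ i / i.factorial := by
        simp [Finset.sum_pair (Ne.symm hn)]
    _ ≤ ∑ i ∈ Finset.range (n + 1), x ^ i / i.factorial :=
        Finset.sum_le_sum_of_subset_of_nonneg hsub fun _ _ _ => by positivity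
    _ ≤ exp x := sum_le_exp_of_nonneg hx _

theorem one_sub_inv_pow_succ_le {n : ℕ} (hn : n ≠ 0) {r P D : ℝ} (hr : 1 < r) (hP : r ^ n ≤ P)
    (hD : D ≤ log r / r) :
    (1 - r⁻¹) ^ (n + 1) ≤ (n.factorial / ((n : ℝ) + 1) ^ (n - 1)) * (P * log r - D) := by
  set t := 1 - r⁻¹
  set L := log r
  set X := (n * t) ^ n / n.factorial
  have ht : 0 < t := sub_pos.2 (inv_lt_one_of_one_lt₀ hr)
  have htL : t ≤ L := one_sub_inv_le_log_of_pos (by linarith)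
  have hL : 0 < L := ht.trans_le htL
  have hX : 0 ≤ X := by positivity
  have hpow : 1 + X ≤ r ^ n :=
    calc 1 + X ≤ exp (n * t) := one_add_pow_div_factorial_le_exp (by positivity) hn
      _ ≤ exp (n * L) := by gcongr
      _ = r ^ n := by rw [exp_nat_mul, exp_log (by linarith)]
  have hbracket : t * X ≤ P * L - D :=
    calc t * X ≤ L * X + L * t := by linarith [mul_le_mul_of_nonneg_right htL hX, mul_pos hL ht]
      _ = L * (1 + X) - L / r := by simp only [t]; ring
      _ ≤ L * r ^ n - L / r := by gcongr
      _ ≤ P * L - D := by linarith [mul_le_mul_of_nonneg_right hP hL.le]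
  have hcoef : 1 ≤ (n : ℝ) ^ n / ((n : ℝ) + 1) ^ (n - 1) :=
    (one_le_div (by positivity)).2 (add_one_pow_pred_le_pow hn)
  calc t ^ (n + 1) ≤ (n : ℝ) ^ n / ((n : ℝ) + 1) ^ (n - 1) * t ^ (n + 1) :=
        le_mul_of_one_le_left (by positivity) hcoef
    _ = (n.factorial / ((n : ℝ) + 1) ^ (n - 1)) * (t * X) := by
        simp only [X, mul_pow]; field_simp; ring
    _ ≤ (n.factorial / ((n : ℝ) + 1) ^ (n - 1)) * (P * L - D) := by gcongr

theorem ConvexOn.log_div_mem_Icc_of_hasDerivWithinAt {f : ℝ → ℝ} {a b f'a f'b : ℝ} (hab : a < b)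
    (hconv : ConvexOn ℝ (Icc a b) fun x => log (f x))
    (hfa : HasDerivWithinAt f f'a (Icc a b) a) (hfb : HasDerivWithinAt f f'b (Icc a b) b)
    (ha : 0 < f a) (hb : 0 < f b) :
    log (f b / f a) ∈ Icc (f'a / f a * (b - a)) (f'b / f b * (b - a)) := by
  have hmem_a := left_mem_Icc.2 hab.le
  have hmem_b := right_mem_Icc.2 hab.le
  have hlow := hconv.le_slope_of_hasDerivWithinAt hmem_a hmem_b hab (hfa.log ha.ne')
  have hup := hconv.slope_le_of_hasDerivWithinAt hmem_a hmem_b hab (hfb.log hb.ne')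
  rw [slope_def_field, le_div_iff₀ (sub_pos.2 hab)] at hlow
  rw [slope_def_field, div_le_iff₀ (sub_pos.2 hab)] at hup
  rw [log_div hb.ne' ha.ne']
  exact ⟨hlow, hup⟩

theorem stmt11_general (a b : ℝ) (hab : a < b)
    (f : ℝ → ℝ)
    (hf_diff : DifferentiableOn ℝ f (Set.Icc a b))
    (hf_pos : ∀ x ∈ Set.Icc a b, 0 < f x)
    (hf'a : 0 < derivWithin f (Set.Icc a b) a)
    (hlog_conv : ConvexOn ℝ (Set.Icc a b) (fun x => Real.log (f x)))
    (n : ℕ) (hn : 1 ≤ n) :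
    (1 - f a / f b) ^ (n + 1) ≤
      ((n.factorial : ℝ) / ((n : ℝ) + 1) ^ (n - 1)) *
        ((derivWithin f (Set.Icc a b) b ^ n / derivWithin f (Set.Icc a b) a ^ n) *
            Real.log (f b / f a) -
          (b - a) * derivWithin f (Set.Icc a b) a / f b) := by
  have hmem_a := left_mem_Icc.2 hab.le
  have hmem_b := right_mem_Icc.2 hab.le
  have ha := hf_pos a hmem_a
  have hb := hf_pos b hmem_b
  obtain ⟨hlow, hup⟩ := hlog_conv.log_div_mem_Icc_of_hasDerivWithinAt hab
    (hf_diff a hmem_a).hasDerivWithinAt (hf_diff b hmem_b).hasDerivWithinAt ha hb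
  set A := derivWithin f (Icc a b) a
  set B := derivWithin f (Icc a b) b
  have hr : 1 < f b / f a :=
    (log_pos_iff (by positivity)).1 ((mul_pos (div_pos hf'a ha) (sub_pos.2 hab)).trans_le hlow)
  have hratio : f b / f a ≤ B / A := by
    have h := le_of_mul_le_mul_right (hlow.trans hup) (sub_pos.2 hab)
    rw [div_le_div_iff₀ ha hb] at h
    rw [div_le_div_iff₀ ha hf'a]
    linarith
  have hD : (b - a) * A / f b ≤ log (f b / f a) / (f b / f a) :=
    calc (b - a) * A / f b = A / f a * (b - a) * (f a / f b) := by field_simp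
      _ ≤ log (f b / f a) * (f a / f b) := by gcongr
      _ = log (f b / f a) / (f b / f a) := by rw [div_div_eq_mul_div, mul_div_assoc]
  rw [show f a / f b = (f b / f a)⁻¹ from (inv_div _ _).symm]
  exact one_sub_inv_pow_succ_le (Nat.one_le_iff_ne_zero.1 hn) hr
    (by rw [← div_pow]; gcongr) hD

theorem stmt11 (a b : ℝ) (hab : a < b)
    (f : ℝ → ℝ)
    (hf_diff : DifferentiableOn ℝ f (Set.Icc a b))
    (hf_diff2 : DifferentiableOn ℝ (derivWithin f (Set.Icc a b)) (Set.Icc a b))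
    (hf_pos : ∀ x ∈ Set.Icc a b, 0 < f x)
    (hf'a : 0 < derivWithin f (Set.Icc a b) a)
    (hf''_nonneg : ∀ x ∈ Set.Icc a b,
      0 ≤ derivWithin (derivWithin f (Set.Icc a b)) (Set.Icc a b) x)
    (hlog_conv : ConvexOn ℝ (Set.Icc a b) (fun x => Real.log (f x)))
    (n : ℕ) (hn : 1 ≤ n) :
    (1 - f a / f b) ^ (n + 1) ≤
      ((n.factorial : ℝ) / ((n : ℝ) + 1) ^ (n - 1)) *
        ((derivWithin f (Set.Icc a b) b ^ n / derivWithin f (Set.Icc a b) a ^ n) *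
            Real.log (f b / f a) -
          (b - a) * derivWithin f (Set.Icc a b) a / f b) :=
  stmt11_general a b hab f hf_diff hf_pos hf'a hlog_conv n hn
end

section
/- If f is a continuously differentiable, strictly positive function on [a,b] with strictly positive derivative such that log∘f is convex on [a,b], then 1 - f(a)/f(b) ≤ (f'(b)·f(a)/(f(b)·f'(a)))·log(f(b)/f(a)) ≤ f'(b)/(e·f'(a)). -/
/-!
Put `u = f b / f a` and `r = f' b / f' a`. The derivative of `log ∘ f` is `f' / f`, and a convex
function has increasing derivative whose value at `a` bounds the secant slope from below; since
`f' a / f a > 0` this gives `1 ≤ u ≤ r`. The middle term equals `(r / u) * log u`, so the claim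
follows from `1 - u⁻¹ ≤ log u` together with `r / u ≥ 1`, and from `e * log u ≤ u`.
-/

open Real Set

namespace ConvexOn

variable {g : ℝ → ℝ} {S : Set ℝ} {x y g'x g'y : ℝ}

lemma hasDerivWithinAt_le_hasDerivWithinAt (hg : ConvexOn ℝ S g) (hx : x ∈ S) (hy : y ∈ S)
    (hxy : x < y) (hgx : HasDerivWithinAt g g'x S x) (hgy : HasDerivWithinAt g g'y S y) :
    g'x ≤ g'y :=
  (hg.le_slope_of_hasDerivWithinAt hx hy hxy hgx).trans
    (hg.slope_le_of_hasDerivWithinAt hx hy hxy hgy)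

lemma lt_of_hasDerivWithinAt_pos (hg : ConvexOn ℝ S g) (hx : x ∈ S) (hy : y ∈ S)
    (hxy : x < y) (hgx : HasDerivWithinAt g g'x S x) (hpos : 0 < g'x) :
    g x < g y := by
  have hslope : 0 < slope g x y := hpos.trans_le (hg.le_slope_of_hasDerivWithinAt hx hy hxy hgx)
  rw [slope_def_field] at hslope
  linarith [(div_pos_iff_of_pos_right (sub_pos.mpr hxy)).mp hslope]

end ConvexOn

lemma one_le_div_and_div_le_derivWithin_div_of_convexOn_log {f : ℝ → ℝ} {S : Set ℝ} {x y : ℝ}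
    (hconv : ConvexOn ℝ S (fun t => log (f t))) (hx : x ∈ S) (hy : y ∈ S) (hxy : x < y)
    (hfx : 0 < f x) (hfy : 0 < f y) (hf'x : 0 < derivWithin f S x)
    (hf'y : 0 < derivWithin f S y) :
    1 ≤ f y / f x ∧ f y / f x ≤ derivWithin f S y / derivWithin f S x := by
  have hlog_deriv {t : ℝ} (hft : 0 < f t) (hf't : 0 < derivWithin f S t) :
      HasDerivWithinAt (fun t => log (f t)) (derivWithin f S t / f t) S t :=
    (differentiableWithinAt_of_derivWithin_ne_zero hf't.ne').hasDerivWithinAt.log hft.ne'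
  have hlog_lt : log (f x) < log (f y) :=
    hconv.lt_of_hasDerivWithinAt_pos hx hy hxy (hlog_deriv hfx hf'x) (div_pos hf'x hfx)
  have hderiv_le : derivWithin f S x / f x ≤ derivWithin f S y / f y :=
    hconv.hasDerivWithinAt_le_hasDerivWithinAt hx hy hxy (hlog_deriv hfx hf'x)
      (hlog_deriv hfy hf'y)
  refine ⟨(one_le_div hfx).mpr ((log_lt_log_iff hfx hfy).mp hlog_lt).le, ?_⟩
  rw [div_le_div_iff₀ hfx hf'x]
  rw [div_le_div_iff₀ hfx hfy] at hderiv_le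
  linarith

lemma one_sub_inv_le_div_mul_log_le_div_exp_one {u r : ℝ} (hu : 1 ≤ u) (hur : u ≤ r) :
    1 - u⁻¹ ≤ r / u * log u ∧ r / u * log u ≤ r / exp 1 := by
  have hu_pos : 0 < u := one_pos.trans_le hu
  have hlog_nonneg : 0 ≤ log u := log_nonneg hu
  constructor
  · calc 1 - u⁻¹ ≤ log u := one_sub_inv_le_log_of_pos hu_pos
      _ ≤ r / u * log u := le_mul_of_one_le_left hlog_nonneg ((one_le_div hu_pos).mpr hur)
  · have he_log : exp 1 * log u ≤ u := by
      simpa only [exp_log hu_pos] using exp_one_mul_le_exp (x := log u)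
    rw [div_mul_eq_mul_div, div_le_div_iff₀ hu_pos (exp_pos 1)]
    nlinarith [mul_le_mul_of_nonneg_left he_log (hu_pos.le.trans hur)]

theorem stmt12_general (a b : ℝ) (hab : a < b)
    (f : ℝ → ℝ)
    (hf_pos : ∀ x ∈ Set.Icc a b, 0 < f x)
    (hf'_pos : ∀ x ∈ Set.Icc a b, 0 < derivWithin f (Set.Icc a b) x)
    (hlog_conv : ConvexOn ℝ (Set.Icc a b) (fun x => Real.log (f x))) :
    1 - f a / f b ≤
        (derivWithin f (Set.Icc a b) b * f a / (f b * derivWithin f (Set.Icc a b) a)) *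
          Real.log (f b / f a) ∧
      (derivWithin f (Set.Icc a b) b * f a / (f b * derivWithin f (Set.Icc a b) a)) *
          Real.log (f b / f a) ≤
        derivWithin f (Set.Icc a b) b / (Real.exp 1 * derivWithin f (Set.Icc a b) a) := by
  have ha : a ∈ Icc a b := left_mem_Icc.mpr hab.le
  have hb : b ∈ Icc a b := right_mem_Icc.mpr hab.le
  have hfa := hf_pos a ha
  have hfb := hf_pos b hb
  have hf'a := hf'_pos a ha
  obtain ⟨hu, hur⟩ := one_le_div_and_div_le_derivWithin_div_of_convexOn_log hlog_conv ha hb hab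
    hfa hfb hf'a (hf'_pos b hb)
  have hcoeff : derivWithin f (Icc a b) b * f a / (f b * derivWithin f (Icc a b) a) =
      derivWithin f (Icc a b) b / derivWithin f (Icc a b) a / (f b / f a) := by
    field_simp
  rw [hcoeff, ← inv_div, mul_comm (exp 1), ← div_div]
  exact one_sub_inv_le_div_mul_log_le_div_exp_one hu hur

theorem stmt12 (a b : ℝ) (hab : a < b)
    (f : ℝ → ℝ)
    (hf_smooth : ContDiffOn ℝ 1 f (Set.Icc a b))
    (hf_pos : ∀ x ∈ Set.Icc a b, 0 < f x)
    (hf'_pos : ∀ x ∈ Set.Icc a b, 0 < derivWithin f (Set.Icc a b) x)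
    (hlog_conv : ConvexOn ℝ (Set.Icc a b) (fun x => Real.log (f x))) :
    1 - f a / f b ≤
        (derivWithin f (Set.Icc a b) b * f a / (f b * derivWithin f (Set.Icc a b) a)) *
          Real.log (f b / f a) ∧
      (derivWithin f (Set.Icc a b) b * f a / (f b * derivWithin f (Set.Icc a b) a)) *
          Real.log (f b / f a) ≤
        derivWithin f (Set.Icc a b) b / (Real.exp 1 * derivWithin f (Set.Icc a b) a) :=
  stmt12_general a b hab f hf_pos hf'_pos hlog_conv
end

section
/- Let n ≥ 2 and let f be an (n-1)-times differentiable function on [a,b] with f⁽ⁱ⁾ ≥ 0 for i = 0,…,n-2. Let g belong to D₊[a,b] or D₋[a,b] be strictly positive and increasing, and let α > n be a real number. Suppose that g^{α-n}·f⁽ⁿ⁻¹⁾ ≥ (n!/(n-1))·f on [a,b]. Then (b-a)·f(a)ⁿ·g(a)^{α} + (∫_a^b f·g)ⁿ ≤ ∫_a^b fⁿ·g^{α}. -/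
/-!
Write `n = m + 2`, let `Fⱼ` be the `j`-fold primitive of `f` vanishing at `a`, `F = F₁`, and
`U(y) = ∫_a^y f g`. Both sides of the inequality vanish when `b = a`, so it suffices to compare
their derivatives in `b`:
  `f(a)ⁿ g(a)^α + n U(x)ⁿ⁻¹ f(x) g(x) ≤ f(x)ⁿ g(x)^α`  for `a < x < b`.
Fix `x`. As `g` increases, on `[a, x]` the growth hypothesis still holds with the weight frozen at
`C = g(x)^(α-n)`: `n m! f ≤ C f⁽ᵐ⁺¹⁾`. Integrating it `m` times (the lower derivatives are
nonnegative at `a`) gives `n m! Fₘ ≤ C f'`. As `f` increases, `f Fᵐ ≤ m! fᵐ Fₘ`, so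
`n f Fᵐ ≤ C fᵐ f'`, which integrates to `n F(x)ᵐ⁺¹ ≤ C (f(x)ᵐ⁺¹ - f(a)ᵐ⁺¹)`. Together with
`U(x) ≤ g(x) F(x)` and `g(x)ⁿ C = g(x)^α` this gives the pointwise inequality.
-/

/-- `D₊[a,b]`: continuous functions on `[a,b]` having a right-derivative at every
point of `(a,b)`. -/
def DPlus (a b : ℝ) (h : ℝ → ℝ) : Prop :=
  ContinuousOn h (Set.Icc a b) ∧ ∀ x ∈ Set.Ioo a b, ∃ L : ℝ, HasDerivWithinAt h L (Set.Ioi x) x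

/-- `D₋[a,b]`: continuous functions on `[a,b]` having a left-derivative at every
point of `(a,b)`. -/
def DMinus (a b : ℝ) (h : ℝ → ℝ) : Prop :=
  ContinuousOn h (Set.Icc a b) ∧ ∀ x ∈ Set.Ioo a b, ∃ L : ℝ, HasDerivWithinAt h L (Set.Iio x) x

open Set MeasureTheory intervalIntegral Nat

theorem image_le_of_hasDerivAt_le {c d : ℝ} {u v u' v' : ℝ → ℝ}
    (hu : ContinuousOn u (Icc c d)) (hv : ContinuousOn v (Icc c d))
    (hu' : ∀ t ∈ Ioo c d, HasDerivAt u (u' t) t) (hv' : ∀ t ∈ Ioo c d, HasDerivAt v (v' t) t)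
    (hle : ∀ t ∈ Ioo c d, u' t ≤ v' t) (hc : u c ≤ v c) :
    ∀ t ∈ Icc c d, u t ≤ v t := by
  have hmono : MonotoneOn (fun t => v t - u t) (Icc c d) := by
    refine monotoneOn_of_hasDerivWithinAt_nonneg (convex_Icc c d) (hv.sub hu)
      (f' := fun t => v' t - u' t) ?_ ?_ <;> rw [interior_Icc]
    · exact fun t ht => ((hv' t ht).sub (hu' t ht)).hasDerivWithinAt
    · exact fun t ht => sub_nonneg.2 (hle t ht)
  intro t ht
  have := hmono (left_mem_Icc.2 (ht.1.trans ht.2)) ht ht.1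
  simp only at this
  linarith

noncomputable def iterIntegral (a : ℝ) (f : ℝ → ℝ) : ℕ → ℝ → ℝ
  | 0 => f
  | j + 1 => fun x => ∫ t in a..x, iterIntegral a f j t

section IterIntegral

variable {a x : ℝ} {f : ℝ → ℝ}

theorem continuousOn_primitive_Icc (hf : ContinuousOn f (Icc a x)) :
    ContinuousOn (fun y => ∫ t in a..y, f t) (Icc a x) := by
  rcases le_or_gt a x with hax | hxa
  · rw [← uIcc_of_le hax] at hf ⊢
    exact continuousOn_primitive_interval hf.integrableOn_uIcc
  · simp [Icc_eq_empty_of_lt hxa]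

theorem hasDerivAt_primitive_of_mem_Ioo (hf : ContinuousOn f (Icc a x)) {t : ℝ}
    (ht : t ∈ Ioo a x) : HasDerivAt (fun y => ∫ s in a..y, f s) (f t) t :=
  integral_hasDerivAt_right
    ((hf.mono (Icc_subset_Icc_right ht.2.le)).intervalIntegrable_of_Icc ht.1.le)
    ((hf.mono Ioo_subset_Icc_self).stronglyMeasurableAtFilter isOpen_Ioo t ht)
    (hf.continuousAt (Icc_mem_nhds ht.1 ht.2))

@[simp]
theorem iterIntegral_zero : iterIntegral a f 0 = f := rfl

theorem iterIntegral_succ (j : ℕ) (y : ℝ) :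
    iterIntegral a f (j + 1) y = ∫ t in a..y, iterIntegral a f j t :=
  rfl

@[simp]
theorem iterIntegral_succ_self (j : ℕ) : iterIntegral a f (j + 1) a = 0 :=
  integral_same

theorem continuousOn_iterIntegral (hf : ContinuousOn f (Icc a x)) (j : ℕ) :
    ContinuousOn (iterIntegral a f j) (Icc a x) := by
  induction j with
  | zero => exact hf
  | succ j ih => exact continuousOn_primitive_Icc ih

theorem hasDerivAt_iterIntegral (hf : ContinuousOn f (Icc a x)) (j : ℕ) {t : ℝ}
    (ht : t ∈ Ioo a x) : HasDerivAt (iterIntegral a f (j + 1)) (iterIntegral a f j t) t :=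
  hasDerivAt_primitive_of_mem_Ioo (continuousOn_iterIntegral hf j) ht

theorem iterIntegral_nonneg (hf : ∀ t ∈ Icc a x, 0 ≤ f t) (j : ℕ) :
    ∀ t ∈ Icc a x, 0 ≤ iterIntegral a f j t := by
  induction j with
  | zero => exact hf
  | succ j ih =>
    exact fun t ht => integral_nonneg ht.1 fun s hs => ih s ⟨hs.1, hs.2.trans ht.2⟩

theorem iterIntegral_one_pow_le {M : ℝ} (hf : ContinuousOn f (Icc a x))
    (hf0 : ∀ t ∈ Icc a x, 0 ≤ f t) (hfM : ∀ t ∈ Icc a x, f t ≤ M) (k : ℕ) :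
    ∀ t ∈ Icc a x,
      iterIntegral a f 1 t ^ (k + 1) ≤ (k + 1)! * M ^ k * iterIntegral a f (k + 1) t := by
  induction k with
  | zero => simp
  | succ k ih =>
    refine image_le_of_hasDerivAt_le ((continuousOn_iterIntegral hf 1).pow _)
      (continuousOn_const.mul (continuousOn_iterIntegral hf _))
      (fun t ht => (hasDerivAt_iterIntegral hf 0 ht).pow (k + 2))
      (fun t ht => (hasDerivAt_iterIntegral hf (k + 1) ht).const_mul _) ?_ (by simp)
    intro t ht
    have hts := Ioo_subset_Icc_self ht
    have hE := iterIntegral_nonneg hf0 (k + 1) t hts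
    have hM : 0 ≤ M := (hf0 t hts).trans (hfM t hts)
    calc ((k + 2 : ℕ) : ℝ) * iterIntegral a f 1 t ^ (k + 2 - 1) * iterIntegral a f 0 t
        = (k + 2) * iterIntegral a f 1 t ^ (k + 1) * f t := by push_cast; rfl
      _ ≤ (k + 2) * ((k + 1)! * M ^ k * iterIntegral a f (k + 1) t) * M := by
        gcongr
        exacts [hf0 t hts, ih t hts, hfM t hts]
      _ = (k + 1 + 1)! * M ^ (k + 1) * iterIntegral a f (k + 1) t := by
        push_cast [factorial_succ]; ring

theorem mul_iterIntegral_one_pow_le (hf : ContinuousOn f (Icc a x))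
    (hf0 : ∀ t ∈ Icc a x, 0 ≤ f t) (hfm : MonotoneOn f (Icc a x)) (m : ℕ) :
    ∀ t ∈ Icc a x, f t * iterIntegral a f 1 t ^ m ≤ m ! * f t ^ m * iterIntegral a f m t := by
  intro t ht
  cases m with
  | zero => simp
  | succ k =>
    have hsub : Icc a t ⊆ Icc a x := Icc_subset_Icc_right ht.2
    have hbound := iterIntegral_one_pow_le (hf.mono hsub) (fun s hs => hf0 s (hsub hs))
      (fun s hs => hfm (hsub hs) ht hs.2) k t (right_mem_Icc.2 ht.1)
    calc f t * iterIntegral a f 1 t ^ (k + 1)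
        ≤ f t * ((k + 1)! * f t ^ k * iterIntegral a f (k + 1) t) :=
          mul_le_mul_of_nonneg_left hbound (hf0 t ht)
      _ = (k + 1)! * f t ^ (k + 1) * iterIntegral a f (k + 1) t := by ring

theorem mul_iterIntegral_le_of_hasDerivAt_chain {N : ℕ} {D : ℕ → ℝ → ℝ} {K C : ℝ}
    (hC : 0 ≤ C) (hf : ContinuousOn f (Icc a x))
    (hDc : ∀ i < N, ContinuousOn (D i) (Icc a x))
    (hD : ∀ i < N, ∀ t ∈ Ioo a x, HasDerivAt (D i) (D (i + 1) t) t)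
    (hDa : ∀ i < N, 0 ≤ D i a) (h : ∀ t ∈ Icc a x, K * f t ≤ C * D N t) :
    ∀ j ≤ N, ∀ t ∈ Icc a x, K * iterIntegral a f j t ≤ C * D (N - j) t := by
  intro j
  induction j with
  | zero => simpa using h
  | succ j ih =>
    intro hj
    have hi : N - (j + 1) < N := by omega
    refine image_le_of_hasDerivAt_le
      (continuousOn_const.mul (continuousOn_iterIntegral hf _))
      (continuousOn_const.mul (hDc _ hi))
      (fun t ht => (hasDerivAt_iterIntegral hf j ht).const_mul K)
      (fun t ht => (hD _ hi t ht).const_mul C) ?_ (by simpa using mul_nonneg hC (hDa _ hi))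
    intro t ht
    rw [show N - (j + 1) + 1 = N - j by omega]
    exact ih (by omega) t (Ioo_subset_Icc_self ht)

theorem iterIntegral_one_pow_le_of_growth {m : ℕ} {D : ℕ → ℝ → ℝ} {C : ℝ} (hC : 0 ≤ C)
    (hf : ContinuousOn f (Icc a x)) (hf0 : ∀ t ∈ Icc a x, 0 ≤ f t)
    (hfm : MonotoneOn f (Icc a x)) (hD0 : D 0 = f)
    (hDc : ∀ i < m + 1, ContinuousOn (D i) (Icc a x))
    (hD : ∀ i < m + 1, ∀ t ∈ Ioo a x, HasDerivAt (D i) (D (i + 1) t) t)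
    (hDa : ∀ i < m + 1, 0 ≤ D i a)
    (hgrowth : ∀ t ∈ Icc a x, (m + 2) * m ! * f t ≤ C * D (m + 1) t) :
    ∀ t ∈ Icc a x,
      (m + 2) * iterIntegral a f 1 t ^ (m + 1) ≤ C * (f t ^ (m + 1) - f a ^ (m + 1)) := by
  have hE := mul_iterIntegral_le_of_hasDerivAt_chain hC hf hDc hD hDa hgrowth m (by omega)
  have hf' : ∀ t ∈ Ioo a x, HasDerivAt f (D 1 t) t := hD0 ▸ hD 0 (by omega)
  refine image_le_of_hasDerivAt_le
    (continuousOn_const.mul ((continuousOn_iterIntegral hf 1).pow _))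
    (continuousOn_const.mul ((hf.pow _).sub continuousOn_const))
    (fun t ht => ((hasDerivAt_iterIntegral hf 0 ht).pow (m + 1)).const_mul _)
    (fun t ht => (((hf' t ht).pow (m + 1)).sub_const _).const_mul C) ?_ (by simp)
  intro t ht
  have hts := Ioo_subset_Icc_self ht
  have hEt := hE t hts
  rw [show m + 1 - m = 1 by omega] at hEt
  have hfm0 : 0 ≤ f t ^ m := pow_nonneg (hf0 t hts) m
  calc (m + 2) * ((m + 1 : ℕ) * iterIntegral a f 1 t ^ (m + 1 - 1) * iterIntegral a f 0 t)
      = (m + 1) * ((m + 2) * (f t * iterIntegral a f 1 t ^ m)) := by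
        simp only [add_tsub_cancel_right, iterIntegral_zero]; push_cast; ring
    _ ≤ (m + 1) * ((m + 2) * (m ! * f t ^ m * iterIntegral a f m t)) := by
      gcongr (m + 1) * ((m + 2) * ?_)
      exact mul_iterIntegral_one_pow_le hf hf0 hfm m t hts
    _ = (m + 1) * f t ^ m * ((m + 2) * m ! * iterIntegral a f m t) := by ring
    _ ≤ (m + 1) * f t ^ m * (C * D 1 t) := by gcongr
    _ = C * ((m + 1 : ℕ) * f t ^ (m + 1 - 1) * D 1 t) := by push_cast; ring

end IterIntegral

theorem mul_add_integral_pow_le_integral {a b c : ℝ} {n : ℕ} {u v : ℝ → ℝ} (hab : a ≤ b)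
    (hu : ContinuousOn u (Icc a b)) (hv : ContinuousOn v (Icc a b))
    (h : ∀ x ∈ Ioo a b, c + (n + 1) * (∫ t in a..x, u t) ^ n * u x ≤ v x) :
    (b - a) * c + (∫ t in a..b, u t) ^ (n + 1) ≤ ∫ t in a..b, v t := by
  refine image_le_of_hasDerivAt_le
    (((continuousOn_id.sub continuousOn_const).mul continuousOn_const).add
      ((continuousOn_primitive_Icc hu).pow _))
    (continuousOn_primitive_Icc hv)
    (fun t ht => (((hasDerivAt_id t).sub_const a).mul_const c).add
      ((hasDerivAt_primitive_of_mem_Ioo hu ht).pow (n + 1)))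
    (fun t ht => hasDerivAt_primitive_of_mem_Ioo hv ht) ?_ (by simp) b (right_mem_Icc.2 hab)
  intro t ht
  simpa using h t ht

theorem integral_mul_le_mul_iterIntegral_one {a x : ℝ} {f g : ℝ → ℝ} (hax : a ≤ x)
    (hf : ContinuousOn f (Icc a x)) (hf0 : ∀ t ∈ Icc a x, 0 ≤ f t)
    (hg : ContinuousOn g (Icc a x)) (hgm : MonotoneOn g (Icc a x)) :
    ∫ t in a..x, f t * g t ≤ g x * iterIntegral a f 1 x := by
  rw [iterIntegral_succ, iterIntegral_zero, ← intervalIntegral.integral_const_mul]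
  refine integral_mono_on hax ((hf.mul hg).intervalIntegrable_of_Icc hax)
    ((continuousOn_const.mul hf).intervalIntegrable_of_Icc hax) fun t ht => ?_
  rw [mul_comm (g x)]
  exact mul_le_mul_of_nonneg_left (hgm ht (right_mem_Icc.2 hax) ht.2) (hf0 t ht)

theorem pow_mul_rpow_add_mul_integral_pow_le {a b α : ℝ} {m : ℕ} {f g : ℝ → ℝ}
    {D : ℕ → ℝ → ℝ} (hα : (m + 2 : ℝ) < α)
    (hf : ContinuousOn f (Icc a b)) (hf0 : ∀ t ∈ Icc a b, 0 ≤ f t)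
    (hfm : MonotoneOn f (Icc a b)) (hD0 : D 0 = f)
    (hDc : ∀ i < m + 1, ContinuousOn (D i) (Icc a b))
    (hD : ∀ i < m + 1, ∀ t ∈ Ioo a b, HasDerivAt (D i) (D (i + 1) t) t)
    (hDa : ∀ i < m + 1, 0 ≤ D i a) (hDtop : ∀ t ∈ Icc a b, 0 ≤ D (m + 1) t)
    (hg : ContinuousOn g (Icc a b)) (hg0 : ∀ t ∈ Icc a b, 0 < g t)
    (hgm : MonotoneOn g (Icc a b))
    (hgrowth : ∀ t ∈ Icc a b, (m + 2) * m ! * f t ≤ g t ^ (α - (m + 2)) * D (m + 1) t)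
    {x : ℝ} (hx : x ∈ Icc a b) :
    f a ^ (m + 2) * g a ^ α + (m + 2) * (∫ t in a..x, f t * g t) ^ (m + 1) * (f x * g x) ≤
      f x ^ (m + 2) * g x ^ α := by
  have hax := hx.1
  have hsub : Icc a x ⊆ Icc a b := Icc_subset_Icc_right hx.2
  have ha : a ∈ Icc a b := left_mem_Icc.2 (hax.trans hx.2)
  have hgx := hg0 x hx
  have hν : 0 < α - (m + 2) := by linarith
  set C := g x ^ (α - (m + 2))
  have hfrozen : ∀ t ∈ Icc a x, (m + 2) * m ! * f t ≤ C * D (m + 1) t := fun t ht =>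
    (hgrowth t (hsub ht)).trans <| mul_le_mul_of_nonneg_right
      (Real.rpow_le_rpow (hg0 t (hsub ht)).le (hgm (hsub ht) hx ht.2) hν.le) (hDtop t (hsub ht))
  have hF := iterIntegral_one_pow_le_of_growth (Real.rpow_nonneg hgx.le _) (hf.mono hsub)
    (fun t ht => hf0 t (hsub ht)) (hfm.mono hsub) hD0 (fun i hi => (hDc i hi).mono hsub)
    (fun i hi t ht => hD i hi t (Ioo_subset_Ioo_right hx.2 ht)) hDa hfrozen x
    (right_mem_Icc.2 hax)
  have hU := integral_mul_le_mul_iterIntegral_one hax (hf.mono hsub)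
    (fun t ht => hf0 t (hsub ht)) (hg.mono hsub) (hgm.mono hsub)
  have hU0 : 0 ≤ ∫ t in a..x, f t * g t :=
    integral_nonneg hax fun t ht => mul_nonneg (hf0 t (hsub ht)) (hg0 t (hsub ht)).le
  have hsplit : g x ^ α = g x ^ (m + 2) * C := by
    rw [← Real.rpow_natCast, ← Real.rpow_add hgx]
    push_cast; ring_nf
  have hga : g a ^ α ≤ g x ^ α :=
    Real.rpow_le_rpow (hg0 a ha).le (hgm ha hx hax) (by linarith)
  have hfa : f a ^ (m + 2) ≤ f x * f a ^ (m + 1) := by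
    rw [pow_succ, mul_comm]
    exact mul_le_mul_of_nonneg_right (hfm ha hx hax) (pow_nonneg (hf0 a ha) _)
  have hfx := hf0 x hx
  have hfa0 : 0 ≤ f a ^ (m + 2) := pow_nonneg (hf0 a ha) _
  calc f a ^ (m + 2) * g a ^ α + (m + 2) * (∫ t in a..x, f t * g t) ^ (m + 1) * (f x * g x)
      ≤ f a ^ (m + 2) * g x ^ α
          + (m + 2) * (g x * iterIntegral a f 1 x) ^ (m + 1) * (f x * g x) := by
        gcongr
    _ = f a ^ (m + 2) * g x ^ α
          + g x ^ (m + 2) * f x * ((m + 2) * iterIntegral a f 1 x ^ (m + 1)) := by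
        ring
    _ ≤ f a ^ (m + 2) * g x ^ α
          + g x ^ (m + 2) * f x * (C * (f x ^ (m + 1) - f a ^ (m + 1))) := by
        gcongr
    _ = g x ^ α * (f x ^ (m + 2) - (f x * f a ^ (m + 1) - f a ^ (m + 2))) := by
        rw [hsplit]; ring
    _ ≤ f x ^ (m + 2) * g x ^ α := by
        rw [mul_comm]
        gcongr
        linarith

theorem hasDerivAt_iteratedDerivWithin_Icc {f : ℝ → ℝ} {a b t : ℝ} {i : ℕ}
    (h : DifferentiableOn ℝ (iteratedDerivWithin i f (Icc a b)) (Icc a b)) (ht : t ∈ Ioo a b) :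
    HasDerivAt (iteratedDerivWithin i f (Icc a b))
      (iteratedDerivWithin (i + 1) f (Icc a b) t) t := by
  rw [iteratedDerivWithin_succ]
  exact (h t (Ioo_subset_Icc_self ht)).hasDerivWithinAt.hasDerivAt (Icc_mem_nhds ht.1 ht.2)

theorem factorial_div_sub_one (m : ℕ) :
    ((m + 2)! : ℝ) / (((m + 2 : ℕ) : ℝ) - 1) = (m + 2) * m ! := by
  rw [div_eq_iff (by push_cast; linarith)]
  push_cast [factorial_succ]
  ring

theorem stmt13 (a b : ℝ) (hab : a < b) (n : ℕ) (hn : 2 ≤ n)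
    (f : ℝ → ℝ)
    (hf_diff : ∀ i < n - 1,
      DifferentiableOn ℝ (iteratedDerivWithin i f (Set.Icc a b)) (Set.Icc a b))
    (hf_nonneg : ∀ i ≤ n - 2, ∀ x ∈ Set.Icc a b,
      0 ≤ iteratedDerivWithin i f (Set.Icc a b) x)
    (g : ℝ → ℝ) (hD : DPlus a b g ∨ DMinus a b g)
    (hg_pos : ∀ x ∈ Set.Icc a b, 0 < g x)
    (hg_mono : MonotoneOn g (Set.Icc a b))
    (α : ℝ) (hα : (n : ℝ) < α)
    (hgrowth : ∀ x ∈ Set.Icc a b,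
      ((n.factorial : ℝ) / ((n : ℝ) - 1)) * f x ≤
        g x ^ (α - (n : ℝ)) * iteratedDerivWithin (n - 1) f (Set.Icc a b) x) :
    (b - a) * f a ^ n * g a ^ α + (∫ x in a..b, f x * g x) ^ n ≤
      ∫ x in a..b, f x ^ n * g x ^ α := by
  obtain ⟨m, rfl⟩ : ∃ m, n = m + 2 := ⟨n - 2, by omega⟩
  set D : ℕ → ℝ → ℝ := fun i => iteratedDerivWithin i f (Icc a b)
  have hD0 : D 0 = f := iteratedDerivWithin_zero
  have hDc : ∀ i < m + 1, ContinuousOn (D i) (Icc a b) := fun i hi => (hf_diff i hi).continuousOn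
  have hDd : ∀ i < m + 1, ∀ t ∈ Ioo a b, HasDerivAt (D i) (D (i + 1) t) t :=
    fun i hi _ ht => hasDerivAt_iteratedDerivWithin_Icc (hf_diff i hi) ht
  have hfc : ContinuousOn f (Icc a b) := hD0 ▸ hDc 0 (by omega)
  have hf0 : ∀ t ∈ Icc a b, 0 ≤ f t := hD0 ▸ hf_nonneg 0 (by omega)
  have hgc : ContinuousOn g (Icc a b) := hD.elim (·.1) (·.1)
  have hgrowth' : ∀ t ∈ Icc a b, (m + 2) * m ! * f t ≤ g t ^ (α - (m + 2)) * D (m + 1) t := by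
    intro t ht
    have h := hgrowth t ht
    rw [factorial_div_sub_one] at h
    exact_mod_cast h
  have hDtop : ∀ t ∈ Icc a b, 0 ≤ D (m + 1) t := fun t ht =>
    nonneg_of_mul_nonneg_right ((mul_nonneg (by positivity) (hf0 t ht)).trans (hgrowth' t ht))
      (Real.rpow_pos_of_pos (hg_pos t ht) _)
  have hfm : MonotoneOn f (Icc a b) := by
    refine monotoneOn_of_hasDerivWithinAt_nonneg (convex_Icc a b) hfc (f' := D 1) ?_ ?_ <;>
      rw [interior_Icc]
    · exact fun t ht => (hD0 ▸ hDd 0 (by omega) t ht).hasDerivWithinAt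
    · rcases m with _ | m
      exacts [fun t ht => hDtop t (Ioo_subset_Icc_self ht),
        fun t ht => hf_nonneg 1 (by omega) t (Ioo_subset_Icc_self ht)]
  have key (x : ℝ) (hx : x ∈ Icc a b) := pow_mul_rpow_add_mul_integral_pow_le
    (by exact_mod_cast hα) hfc hf0 hfm hD0 hDc hDd
    (fun i hi => hf_nonneg i (by omega) a (left_mem_Icc.2 hab.le)) hDtop hgc hg_pos hg_mono
    hgrowth' hx
  simpa only [mul_assoc] using mul_add_integral_pow_le_integral (n := m + 1)
    (u := fun t => f t * g t) (v := fun t => f t ^ (m + 2) * g t ^ α) hab.le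
    (hfc.mul hgc) ((hfc.pow _).mul (hgc.rpow_const fun t ht => Or.inl (hg_pos t ht).ne'))
    fun x hx => by push_cast; linarith [key x (Ioo_subset_Icc_self hx)]
end

section
/- Let n ≥ 2 and let f be an (n-1)-times differentiable function on [a,b] with f⁽ⁱ⁾ ≥ 0 for i = 0,…,n-2. Let g, h both belong to D₊[a,b] (or both to D₋[a,b]) with g, h ≥ 0, g increasing, and h and g·h decreasing on [a,b]. Suppose f⁽ⁿ⁻¹⁾ ≥ (n!/(n-1))·f·g^{n-l}·hⁿ on [a,b] for some l ∈ {1,…,n}. Then (b-a)·f(a)ⁿ·g(a)^{l} + (∫_a^b f·g·h)ⁿ ≤ ∫_a^b fⁿ·g^{l}. -/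
/-!
Put `P x = ∫ₐˣ f g h`, `m = n - 1` and `c = n! / (n - 1)`. By induction on `k = 1, …, m`,
`c (gh)^(m-k) h P^k ≤ g^(l-1) ∫ₐˣ k! f^(k-1) f⁽ᵐ⁻ᵏ⁺¹⁾`: write `P^k` as the integral of
`k P^(k-1) f g h`, move the decreasing weight `(gh)^(m-k) h` into the integral and the increasing
weight `g^(l-1)` out of it, and bound the integrand by the case `k - 1` (for `k = 1`, by the growth
condition on `f⁽ᵐ⁾`), using `∫ₐᵗ f^(k-1) f⁽ⁱ⁺¹⁾ ≤ f(t)^(k-1) f⁽ⁱ⁾(t)` because `f^(k-1)` increases.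
At `k = m` the right-hand side is `(m-1)! g^(l-1) (f^m - f(a)^m)`, which yields the pointwise bound
`n P^(n-1) f g h ≤ f^n g^l - f(a)^n g(a)^l`; integrating it gives the theorem.
-/

open Set MeasureTheory intervalIntegral
open scoped Nat

section

variable {a b : ℝ} {w ρ : ℝ → ℝ}

theorem MonotoneOn.integral_mul_le_mul_integral (hab : a ≤ b) (hw : MonotoneOn w (Icc a b))
    (hρ : ∀ x ∈ Icc a b, 0 ≤ ρ x) (hρi : IntervalIntegrable ρ volume a b)
    (hwρ : IntervalIntegrable (fun x => w x * ρ x) volume a b) :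
    ∫ x in a..b, w x * ρ x ≤ w b * ∫ x in a..b, ρ x := by
  rw [← intervalIntegral.integral_const_mul]
  exact integral_mono_on hab hwρ (hρi.const_mul _) fun x hx =>
    mul_le_mul_of_nonneg_right (hw hx (right_mem_Icc.2 hab) hx.2) (hρ x hx)

theorem AntitoneOn.mul_integral_le_integral_mul (hab : a ≤ b) (hw : AntitoneOn w (Icc a b))
    (hρ : ∀ x ∈ Icc a b, 0 ≤ ρ x) (hρi : IntervalIntegrable ρ volume a b)
    (hwρ : IntervalIntegrable (fun x => w x * ρ x) volume a b) :
    w b * ∫ x in a..b, ρ x ≤ ∫ x in a..b, w x * ρ x := by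
  rw [← intervalIntegral.integral_const_mul]
  exact integral_mono_on hab (hρi.const_mul _) hwρ fun x hx =>
    mul_le_mul_of_nonneg_right (hw hx (right_mem_Icc.2 hab) hx.2) (hρ x hx)

theorem integral_mul_deriv_le_of_monotoneOn {u u' : ℝ → ℝ} (hab : a ≤ b)
    (hu : ContinuousOn u (Icc a b)) (hu' : ∀ x ∈ Ioo a b, HasDerivAt u (u' x) x)
    (hu'nn : ∀ x ∈ Icc a b, 0 ≤ u' x) (hua : 0 ≤ u a)
    (hw : MonotoneOn w (Icc a b)) (hwc : ContinuousOn w (Icc a b)) (hwb : 0 ≤ w b) :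
    ∫ x in a..b, w x * u' x ≤ w b * u b := by
  have hu'i : IntervalIntegrable u' volume a b := by
    rw [intervalIntegrable_iff_integrableOn_Ioc_of_le hab]
    exact integrableOn_deriv_of_nonneg hu hu' fun x hx => hu'nn x (Ioo_subset_Icc_self hx)
  calc ∫ x in a..b, w x * u' x ≤ w b * ∫ x in a..b, u' x :=
        hw.integral_mul_le_mul_integral hab hu'nn hu'i
          (hu'i.continuousOn_mul (by rwa [uIcc_of_le hab]))
    _ = w b * (u b - u a) := by rw [integral_eq_sub_of_hasDerivAt_of_le hab hu hu' hu'i]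
    _ ≤ w b * u b := by nlinarith

theorem mul_le_mul_integral_of_antitoneOn_of_monotoneOn {A G B β ψ : ℝ → ℝ}
    (hA : AntitoneOn A (Icc a b)) (hAc : ContinuousOn A (Icc a b))
    (hG : MonotoneOn G (Icc a b)) (hGc : ContinuousOn G (Icc a b))
    (hBa : B a = 0) (hBc : ContinuousOn B (Icc a b))
    (hBd : ∀ x ∈ Ioo a b, HasDerivAt B (β x) x)
    (hβc : ContinuousOn β (Icc a b)) (hβ : ∀ x ∈ Icc a b, 0 ≤ β x)
    (hψi : IntervalIntegrable ψ volume a b) (hψ : ∀ x ∈ Icc a b, 0 ≤ ψ x)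
    (hAG : ∀ x ∈ Icc a b, A x * β x ≤ G x * ψ x) :
    ∀ x ∈ Icc a b, A x * B x ≤ G x * ∫ t in a..x, ψ t := by
  intro x hx
  have hsub : Icc a x ⊆ Icc a b := Icc_subset_Icc_right hx.2
  have hβi : IntervalIntegrable β volume a x := (hβc.mono hsub).intervalIntegrable_of_Icc hx.1
  have hψi : IntervalIntegrable ψ volume a x := hψi.mono_set (by
    rw [uIcc_of_le hx.1, uIcc_of_le (hx.1.trans hx.2)]; exact hsub)
  have hAβi : IntervalIntegrable (fun t => A t * β t) volume a x :=
    ((hAc.mono hsub).mul (hβc.mono hsub)).intervalIntegrable_of_Icc hx.1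
  have hGψi : IntervalIntegrable (fun t => G t * ψ t) volume a x :=
    hψi.continuousOn_mul (by rw [uIcc_of_le hx.1]; exact hGc.mono hsub)
  have hBx : B x = ∫ t in a..x, β t := by
    rw [integral_eq_sub_of_hasDerivAt_of_le hx.1 (hBc.mono hsub)
      (fun t ht => hBd t ⟨ht.1, ht.2.trans_le hx.2⟩) hβi, hBa, sub_zero]
  calc A x * B x ≤ ∫ t in a..x, A t * β t := hBx ▸
        (hA.mono hsub).mul_integral_le_integral_mul hx.1 (fun t ht => hβ t (hsub ht)) hβi hAβi
    _ ≤ ∫ t in a..x, G t * ψ t := integral_mono_on hx.1 hAβi hGψi fun t ht => hAG t (hsub ht)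
    _ ≤ G x * ∫ t in a..x, ψ t :=
        (hG.mono hsub).integral_mul_le_mul_integral hx.1 (fun t ht => hψ t (hsub ht)) hψi hGψi

theorem hasDerivAt_integral_of_continuousOn {u : ℝ → ℝ} (hu : ContinuousOn u (Icc a b))
    {x : ℝ} (hx : x ∈ Ioo a b) : HasDerivAt (fun y => ∫ t in a..y, u t) (u x) x :=
  integral_hasDerivAt_right
    ((hu.mono (Icc_subset_Icc_right hx.2.le)).intervalIntegrable_of_Icc hx.1.le)
    ((hu.mono Ioo_subset_Icc_self).stronglyMeasurableAtFilter isOpen_Ioo x hx)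
    (hu.continuousAt (Icc_mem_nhds hx.1 hx.2))

theorem continuousOn_integral_of_continuousOn {u : ℝ → ℝ} (hab : a ≤ b)
    (hu : ContinuousOn u (Icc a b)) : ContinuousOn (fun y => ∫ t in a..y, u t) (Icc a b) := by
  simpa [uIcc_of_le hab] using continuousOn_primitive_interval (μ := volume) (a := a) (b := b)
    (f := u) (by rw [uIcc_of_le hab]; exact hu.integrableOn_Icc)

theorem sub_mul_add_le_integral {K : ℝ} {Q q ψ : ℝ → ℝ} (hab : a ≤ b) (hQa : Q a = 0)
    (hQc : ContinuousOn Q (Icc a b)) (hQd : ∀ x ∈ Ioo a b, HasDerivAt Q (q x) x)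
    (hqc : ContinuousOn q (Icc a b)) (hψ : IntervalIntegrable ψ volume a b)
    (h : ∀ x ∈ Icc a b, K + q x ≤ ψ x) : (b - a) * K + Q b ≤ ∫ x in a..b, ψ x := by
  have hq : IntervalIntegrable q volume a b := hqc.intervalIntegrable_of_Icc hab
  have hK : IntervalIntegrable (fun _ => K) volume a b := intervalIntegrable_const
  have := integral_mono_on hab (hK.add hq) hψ h
  rwa [integral_add hK hq, intervalIntegral.integral_const, smul_eq_mul,
    integral_eq_sub_of_hasDerivAt_of_le hab hQc hQd hq, hQa, sub_zero] at this

theorem pow_mul_pow_add_mul_le {p₀ p q₀ q r : ℝ} (k : ℕ) {l : ℕ} (hl : 1 ≤ l)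
    (hp₀ : 0 ≤ p₀) (hp : p₀ ≤ p) (hq₀ : 0 ≤ q₀) (hq : q₀ ≤ q)
    (hr : r ≤ q ^ (l - 1) * (p ^ (k + 1) - p₀ ^ (k + 1))) :
    p₀ ^ (k + 2) * q₀ ^ l + p * q * r ≤ p ^ (k + 2) * q ^ l := by
  obtain ⟨l, rfl⟩ := Nat.exists_eq_add_of_le' hl
  have h1 : p₀ ^ (k + 2) * q₀ ^ (l + 1) ≤ p₀ ^ (k + 1) * p * q ^ (l + 1) := by
    rw [pow_succ p₀ (k + 1)]
    have := hp₀.trans hp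
    gcongr
  have h2 : p * q * r ≤ p * q * (q ^ l * (p ^ (k + 1) - p₀ ^ (k + 1))) := by
    have := hp₀.trans hp; have := hq₀.trans hq
    simpa using mul_le_mul_of_nonneg_left hr (by positivity : 0 ≤ p * q)
  calc p₀ ^ (k + 2) * q₀ ^ (l + 1) + p * q * r
      ≤ p₀ ^ (k + 1) * p * q ^ (l + 1) + p * q * (q ^ l * (p ^ (k + 1) - p₀ ^ (k + 1))) :=
        add_le_add h1 h2
    _ = p ^ (k + 2) * q ^ (l + 1) := by ring

theorem antitoneOn_const_mul_pow_mul {c : ℝ} (hc : 0 ≤ c) {h : ℝ → ℝ}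
    (hw : AntitoneOn w (Icc a b)) (hwnn : ∀ x ∈ Icc a b, 0 ≤ w x)
    (hh : AntitoneOn h (Icc a b)) (hhnn : ∀ x ∈ Icc a b, 0 ≤ h x) (j : ℕ) :
    AntitoneOn (fun x => c * w x ^ j * h x) (Icc a b) := fun x hx y hy hxy => by
  have := hw hx hy hxy
  have := hh hx hy hxy
  have := hwnn x hx
  have := hwnn y hy
  have := hhnn y hy
  dsimp only
  gcongr

theorem factorial_add_two_div (k : ℕ) :
    ((k + 2)! : ℝ) / (((k + 2 : ℕ) : ℝ) - 1) = (k + 2) * k ! := by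
  have : ((k + 2 : ℕ) : ℝ) - 1 = k + 1 := by push_cast; ring
  rw [this, div_eq_iff (by positivity)]
  push_cast [Nat.factorial_succ]
  ring

end

structure NonnegDerivChain (F : ℕ → ℝ → ℝ) (m : ℕ) (a b : ℝ) : Prop where
  continuousOn : ∀ i < m, ContinuousOn (F i) (Icc a b)
  hasDerivAt : ∀ i < m, ∀ x ∈ Ioo a b, HasDerivAt (F i) (F (i + 1) x) x
  nonneg : ∀ i ≤ m, ∀ x ∈ Icc a b, 0 ≤ F i x

namespace NonnegDerivChain

variable {F : ℕ → ℝ → ℝ} {m : ℕ} {a b : ℝ}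

theorem mono (hF : NonnegDerivChain F m a b) {x : ℝ} (hx : x ≤ b) :
    NonnegDerivChain F m a x where
  continuousOn i hi := (hF.continuousOn i hi).mono (Icc_subset_Icc_right hx)
  hasDerivAt i hi y hy := hF.hasDerivAt i hi y ⟨hy.1, hy.2.trans_le hx⟩
  nonneg i hi y hy := hF.nonneg i hi y ⟨hy.1, hy.2.trans hx⟩

theorem monotoneOn (hF : NonnegDerivChain F m a b) {i : ℕ} (hi : i < m) :
    MonotoneOn (F i) (Icc a b) :=
  monotoneOn_of_hasDerivWithinAt_nonneg (convex_Icc a b) (hF.continuousOn i hi)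
    (fun x hx => (hF.hasDerivAt i hi x (by rwa [interior_Icc] at hx)).hasDerivWithinAt)
    (fun x hx => hF.nonneg (i + 1) hi x (interior_subset hx))

theorem intervalIntegrable (hF : NonnegDerivChain F m a b) (hab : a ≤ b) {i : ℕ} (hi : i < m) :
    IntervalIntegrable (F (i + 1)) volume a b := by
  rw [intervalIntegrable_iff_integrableOn_Ioc_of_le hab]
  exact integrableOn_deriv_of_nonneg (hF.continuousOn i hi) (hF.hasDerivAt i hi)
    fun x hx => hF.nonneg (i + 1) hi x (Ioo_subset_Icc_self hx)

theorem monotoneOn_pow (hF : NonnegDerivChain F m a b) (hm : 0 < m) (k : ℕ) :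
    MonotoneOn (fun x => F 0 x ^ k) (Icc a b) := fun x hx _ hy hxy =>
  pow_le_pow_left₀ (hF.nonneg 0 hm.le x hx) (hF.monotoneOn hm hx hy hxy) k

theorem integral_pow_mul_le (hF : NonnegDerivChain F m a b) (hab : a ≤ b) (k : ℕ) {i : ℕ}
    (hi : i + 1 < m) : ∫ x in a..b, F 0 x ^ k * F (i + 2) x ≤ F 0 b ^ k * F (i + 1) b :=
  integral_mul_deriv_le_of_monotoneOn hab (hF.continuousOn (i + 1) hi) (hF.hasDerivAt (i + 1) hi)
    (hF.nonneg (i + 2) hi) (hF.nonneg (i + 1) hi.le a (left_mem_Icc.2 hab))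
    (hF.monotoneOn_pow (by omega) k) ((hF.continuousOn 0 (by omega)).pow k)
    (pow_nonneg (hF.nonneg 0 (by omega) b (right_mem_Icc.2 hab)) k)

theorem integral_factorial_mul_pow_mul {k : ℕ} (hF : NonnegDerivChain F (k + 1) a b)
    (hab : a ≤ b) :
    ∫ x in a..b, ((k + 1)! : ℝ) * (F 0 x ^ k * F 1 x) =
      k ! * (F 0 b ^ (k + 1) - F 0 a ^ (k + 1)) := by
  have hd : ∀ x ∈ Ioo a b,
      HasDerivAt (fun x => F 0 x ^ (k + 1)) ((k + 1) * F 0 x ^ k * F 1 x) x := fun x hx => by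
    simpa using (hF.hasDerivAt 0 k.succ_pos x hx).fun_pow (k + 1)
  have hi : IntervalIntegrable (fun x => (k + 1) * F 0 x ^ k * F 1 x) volume a b := by
    simpa [mul_assoc] using ((hF.intervalIntegrable hab k.succ_pos).continuousOn_mul
      (((hF.continuousOn 0 k.succ_pos).pow k).mono (uIcc_of_le hab).le)).const_mul ((k : ℝ) + 1)
  calc ∫ x in a..b, ((k + 1)! : ℝ) * (F 0 x ^ k * F 1 x)
      = k ! * ∫ x in a..b, (k + 1) * F 0 x ^ k * F 1 x := by
        rw [← intervalIntegral.integral_const_mul]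
        congr 1; ext x; push_cast [Nat.factorial_succ]; ring
    _ = k ! * (F 0 b ^ (k + 1) - F 0 a ^ (k + 1)) := by
        rw [integral_eq_sub_of_hasDerivAt_of_le hab ((hF.continuousOn 0 k.succ_pos).pow _) hd hi]
        rfl

variable {c : ℝ} {w h G : ℝ → ℝ}

theorem mul_pow_le_integral (hF : NonnegDerivChain F m a b) (hab : a ≤ b) (hc : 0 ≤ c)
    (hw : AntitoneOn w (Icc a b)) (hwc : ContinuousOn w (Icc a b))
    (hwnn : ∀ x ∈ Icc a b, 0 ≤ w x)
    (hh : AntitoneOn h (Icc a b)) (hhc : ContinuousOn h (Icc a b))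
    (hhnn : ∀ x ∈ Icc a b, 0 ≤ h x)
    (hG : MonotoneOn G (Icc a b)) (hGc : ContinuousOn G (Icc a b))
    (hGnn : ∀ x ∈ Icc a b, 0 ≤ G x)
    (hbase : ∀ x ∈ Icc a b, c * w x ^ m * h x * F 0 x ≤ G x * F m x)
    {j k : ℕ} (hjk : j + k + 1 = m) :
    ∀ x ∈ Icc a b, c * w x ^ j * h x * (∫ t in a..x, F 0 t * w t) ^ (k + 1) ≤
      G x * ∫ t in a..x, ((k + 1)! : ℝ) * (F 0 t ^ k * F (j + 1) t) := by
  have hf := hF.nonneg 0 (by omega)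
  have hfwc : ContinuousOn (fun t => F 0 t * w t) (Icc a b) :=
    (hF.continuousOn 0 (by omega)).mul hwc
  have hfwnn : ∀ x ∈ Icc a b, 0 ≤ F 0 x * w x := fun x hx => mul_nonneg (hf x hx) (hwnn x hx)
  set P := fun x => ∫ t in a..x, F 0 t * w t
  have hPc : ContinuousOn P (Icc a b) := continuousOn_integral_of_continuousOn hab hfwc
  have hPd : ∀ x ∈ Ioo a b, HasDerivAt P (F 0 x * w x) x := fun x hx =>
    hasDerivAt_integral_of_continuousOn hfwc hx
  have hPnn : ∀ x ∈ Icc a b, 0 ≤ P x := fun x hx =>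
    integral_nonneg hx.1 fun t ht => hfwnn t ⟨ht.1, ht.2.trans hx.2⟩
  have hA := antitoneOn_const_mul_pow_mul hc hw hwnn hh hhnn
  have hAc : ∀ j, ContinuousOn (fun x => c * w x ^ j * h x) (Icc a b) := fun j =>
    (continuousOn_const.mul (hwc.pow j)).mul hhc
  induction k generalizing j with
  | zero =>
    obtain rfl : m = j + 1 := by omega
    simpa using mul_le_mul_integral_of_antitoneOn_of_monotoneOn (hA j) (hAc j) hG hGc
      (by simp [P]) hPc hPd hfwc hfwnn (hF.intervalIntegrable hab j.lt_succ_self)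
      (hF.nonneg (j + 1) le_rfl)
      (fun t ht => by have := hbase t ht; rw [pow_succ] at this; linarith)
  | succ k ih =>
    have key : ∀ t ∈ Icc a b, c * w t ^ j * h t * ((k + 2) * P t ^ (k + 1) * (F 0 t * w t)) ≤
        G t * ((k + 2)! * (F 0 t ^ (k + 1) * F (j + 1) t)) := by
      intro t ht
      have h0 : 0 ≤ (k + 2) * F 0 t := by have := hf t ht; positivity
      have := hGnn t ht
      calc c * w t ^ j * h t * ((k + 2) * P t ^ (k + 1) * (F 0 t * w t))
          = (k + 2) * F 0 t * (c * w t ^ (j + 1) * h t * P t ^ (k + 1)) := by ring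
        _ ≤ (k + 2) * F 0 t *
              (G t * ((k + 1)! * ∫ s in a..t, F 0 s ^ k * F (j + 2) s)) := by
            rw [← intervalIntegral.integral_const_mul]
            exact mul_le_mul_of_nonneg_left (ih (j := j + 1) (by omega) t ht) h0
        _ ≤ (k + 2) * F 0 t * (G t * ((k + 1)! * (F 0 t ^ k * F (j + 1) t))) := by
            have := (hF.mono ht.2).integral_pow_mul_le ht.1 k (i := j) (by omega)
            gcongr
        _ = G t * ((k + 2)! * (F 0 t ^ (k + 1) * F (j + 1) t)) := by
            rw [Nat.factorial_succ (k + 1)]; push_cast; ring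
    exact mul_le_mul_integral_of_antitoneOn_of_monotoneOn (hA j) (hAc j) hG hGc
      (B := fun t => P t ^ (k + 2)) (β := fun t => (k + 2) * P t ^ (k + 1) * (F 0 t * w t))
      (ψ := fun t => (k + 2)! * (F 0 t ^ (k + 1) * F (j + 1) t)) (by simp [P]) (hPc.pow _)
      (fun t ht => by simpa using (hPd t ht).fun_pow (k + 2))
      ((continuousOn_const.mul (hPc.pow _)).mul hfwc)
      (fun t ht => by have := hPnn t ht; have := hfwnn t ht; positivity)
      (((hF.intervalIntegrable hab (i := j) (by omega)).continuousOn_mul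
        (((hF.continuousOn 0 (by omega)).pow (k + 1)).mono (uIcc_of_le hab).le)).const_mul _)
      (fun t ht => by
        have := hf t ht; have := hF.nonneg (j + 1) (by omega) t ht; positivity)
      key

theorem mul_pow_le_factorial_mul_sub {k : ℕ} (hF : NonnegDerivChain F (k + 1) a b)
    (hab : a ≤ b) (hc : 0 ≤ c)
    (hw : AntitoneOn w (Icc a b)) (hwc : ContinuousOn w (Icc a b))
    (hwnn : ∀ x ∈ Icc a b, 0 ≤ w x)
    (hh : AntitoneOn h (Icc a b)) (hhc : ContinuousOn h (Icc a b))
    (hhnn : ∀ x ∈ Icc a b, 0 ≤ h x)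
    (hG : MonotoneOn G (Icc a b)) (hGc : ContinuousOn G (Icc a b))
    (hGnn : ∀ x ∈ Icc a b, 0 ≤ G x)
    (hbase : ∀ x ∈ Icc a b, c * w x ^ (k + 1) * h x * F 0 x ≤ G x * F (k + 1) x) :
    ∀ x ∈ Icc a b, c * h x * (∫ t in a..x, F 0 t * w t) ^ (k + 1) ≤
      k ! * (G x * (F 0 x ^ (k + 1) - F 0 a ^ (k + 1))) := by
  intro x hx
  have := hF.mul_pow_le_integral hab hc hw hwc hwnn hh hhc hhnn hG hGc hGnn hbase
    (j := 0) (k := k) (by ring) x hx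
  rwa [pow_zero, mul_one, (hF.mono hx.2).integral_factorial_mul_pow_mul hx.1,
    mul_left_comm] at this

theorem sub_mul_add_integral_pow_le_integral {k l : ℕ} (hF : NonnegDerivChain F (k + 1) a b)
    (hab : a ≤ b) {g : ℝ → ℝ}
    (hg : MonotoneOn g (Icc a b)) (hgc : ContinuousOn g (Icc a b))
    (hgnn : ∀ x ∈ Icc a b, 0 ≤ g x)
    (hh : AntitoneOn h (Icc a b)) (hhc : ContinuousOn h (Icc a b))
    (hhnn : ∀ x ∈ Icc a b, 0 ≤ h x)
    (hgh : AntitoneOn (fun x => g x * h x) (Icc a b)) (hl1 : 1 ≤ l) (hl2 : l ≤ k + 2)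
    (hgrowth : ∀ x ∈ Icc a b,
      (k + 2) * k ! * F 0 x * g x ^ (k + 2 - l) * h x ^ (k + 2) ≤ F (k + 1) x) :
    (b - a) * F 0 a ^ (k + 2) * g a ^ l + (∫ x in a..b, F 0 x * g x * h x) ^ (k + 2) ≤
      ∫ x in a..b, F 0 x ^ (k + 2) * g x ^ l := by
  have hf := hF.nonneg 0 (by omega)
  have hfc := hF.continuousOn 0 (by omega)
  have hbase : ∀ x ∈ Icc a b, (k + 2) * k ! * (g x * h x) ^ (k + 1) * h x * F 0 x ≤
      g x ^ (l - 1) * F (k + 1) x := fun x hx => by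
    have hg : g x ^ (k + 1) = g x ^ (l - 1) * g x ^ (k + 2 - l) := by
      rw [← pow_add]; congr 1; omega
    calc _ = g x ^ (l - 1) * ((k + 2) * k ! * F 0 x * g x ^ (k + 2 - l) * h x ^ (k + 2)) := by
          rw [mul_pow, hg]; ring
      _ ≤ _ := mul_le_mul_of_nonneg_left (hgrowth x hx) (pow_nonneg (hgnn x hx) _)
  have hbound := hF.mul_pow_le_factorial_mul_sub hab (by positivity) hgh (hgc.mul hhc)
    (fun x hx => mul_nonneg (hgnn x hx) (hhnn x hx)) hh hhc hhnn
    (fun x hx y hy hxy => pow_le_pow_left₀ (hgnn x hx) (hg hx hy hxy) _) (hgc.pow _)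
    (fun x hx => pow_nonneg (hgnn x hx) _) hbase
  set P := fun x => ∫ t in a..x, F 0 t * g t * h t
  have hfghc : ContinuousOn (fun t => F 0 t * g t * h t) (Icc a b) := (hfc.mul hgc).mul hhc
  have hpt : ∀ x ∈ Icc a b,
      F 0 a ^ (k + 2) * g a ^ l + (k + 2) * P x ^ (k + 1) * (F 0 x * g x * h x) ≤
        F 0 x ^ (k + 2) * g x ^ l := fun x hx => by
    have ha := left_mem_Icc.2 hab
    have hPx : (k + 2) * h x * P x ^ (k + 1) ≤
        g x ^ (l - 1) * (F 0 x ^ (k + 1) - F 0 a ^ (k + 1)) := by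
      have := hbound x hx
      simp only [← mul_assoc] at this
      refine le_of_mul_le_mul_left ?_ (by positivity : (0 : ℝ) < k !)
      linarith
    have := pow_mul_pow_add_mul_le k hl1 (hf a ha) (hF.monotoneOn (by omega) ha hx hx.1)
      (hgnn a ha) (hg ha hx hx.1) hPx
    linarith
  have hPc : ContinuousOn P (Icc a b) := continuousOn_integral_of_continuousOn hab hfghc
  have := sub_mul_add_le_integral hab (Q := fun x => P x ^ (k + 2)) (by simp [P]) (hPc.pow _)
    (fun x hx => by simpa using (hasDerivAt_integral_of_continuousOn hfghc hx).fun_pow (k + 2))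
    ((continuousOn_const.mul (hPc.pow _)).mul hfghc)
    (((hfc.pow _).mul (hgc.pow _)).intervalIntegrable_of_Icc hab) hpt
  rw [mul_assoc (b - a)]
  exact this

end NonnegDerivChain

theorem nonnegDerivChain_iteratedDerivWithin {f : ℝ → ℝ} {m : ℕ} {a b : ℝ}
    (hdiff : ∀ i < m, DifferentiableOn ℝ (iteratedDerivWithin i f (Icc a b)) (Icc a b))
    (hnn : ∀ i ≤ m, ∀ x ∈ Icc a b, 0 ≤ iteratedDerivWithin i f (Icc a b) x) :
    NonnegDerivChain (fun i => iteratedDerivWithin i f (Icc a b)) m a b where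
  continuousOn i hi := (hdiff i hi).continuousOn
  hasDerivAt i hi x hx := by
    rw [iteratedDerivWithin_succ]
    exact ((hdiff i hi) x (Ioo_subset_Icc_self hx)).hasDerivWithinAt.hasDerivAt
      (Icc_mem_nhds hx.1 hx.2)
  nonneg := hnn

theorem stmt16 (a b : ℝ) (hab : a < b) (n : ℕ) (hn : 2 ≤ n)
    (f : ℝ → ℝ)
    (hf_diff : ∀ i < n - 1,
      DifferentiableOn ℝ (iteratedDerivWithin i f (Set.Icc a b)) (Set.Icc a b))
    (hf_nonneg : ∀ i ≤ n - 2, ∀ x ∈ Set.Icc a b,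
      0 ≤ iteratedDerivWithin i f (Set.Icc a b) x)
    (g h : ℝ → ℝ)
    (hD : (DPlus a b g ∧ DPlus a b h) ∨ (DMinus a b g ∧ DMinus a b h))
    (hg_nonneg : ∀ x ∈ Set.Icc a b, 0 ≤ g x)
    (hh_nonneg : ∀ x ∈ Set.Icc a b, 0 ≤ h x)
    (hg_mono : MonotoneOn g (Set.Icc a b))
    (hh_anti : AntitoneOn h (Set.Icc a b))
    (hgh_anti : AntitoneOn (fun x => g x * h x) (Set.Icc a b))
    (l : ℕ) (hl1 : 1 ≤ l) (hl2 : l ≤ n)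
    (hgrowth : ∀ x ∈ Set.Icc a b,
      ((n.factorial : ℝ) / ((n : ℝ) - 1)) * f x * g x ^ (n - l) * h x ^ n ≤
        iteratedDerivWithin (n - 1) f (Set.Icc a b) x) :
    (b - a) * f a ^ n * g a ^ l + (∫ x in a..b, f x * g x * h x) ^ n ≤
      ∫ x in a..b, f x ^ n * g x ^ l := by
  obtain ⟨k, rfl⟩ := Nat.exists_eq_add_of_le' hn
  simp only [factorial_add_two_div] at hgrowth
  have hgc : ContinuousOn g (Icc a b) := by rcases hD with ⟨hg, -⟩ | ⟨hg, -⟩ <;> exact hg.1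
  have hhc : ContinuousOn h (Icc a b) := by rcases hD with ⟨-, hh⟩ | ⟨-, hh⟩ <;> exact hh.1
  have hf : ∀ x ∈ Icc a b, 0 ≤ f x := fun x hx => by simpa using hf_nonneg 0 (by omega) x hx
  have hF := nonnegDerivChain_iteratedDerivWithin (m := k + 1) hf_diff fun i hi x hx => by
    rcases hi.lt_or_eq with hi | rfl
    · exact hf_nonneg i (by omega) x hx
    · have := hf x hx; have := hg_nonneg x hx; have := hh_nonneg x hx
      exact (hgrowth x hx).trans' (by positivity)
  simpa using hF.sub_mul_add_integral_pow_le_integral hab.le hg_mono hgc hg_nonneg hh_anti hhc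
    hh_nonneg hgh_anti hl1 hl2 (by simpa using hgrowth)
end

section
/- Let n ≥ 2 and let f be a strictly positive, n-times differentiable function on [a,b] with f⁽ⁱ⁾ ≥ 0 for i = 1,…,n-2. Suppose f⁽ⁿ⁻¹⁾ is strictly positive on [a,b] and f/f⁽ⁿ⁻¹⁾ is increasing on [a,b]. Then (b-a)·f(a)^{n+1}/f⁽ⁿ⁻¹⁾(a) + ((n-1)/n!)·(∫_a^b f)ⁿ ≤ ∫_a^b f^{n+1}/f⁽ⁿ⁻¹⁾. -/
/-!
Write `f = q · f⁽ⁿ⁻¹⁾` with `q = f / f⁽ⁿ⁻¹⁾` increasing, and let `F x = ∫ t in a..x, f t`.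
Everything rests on one comparison principle: if `u a ≤ q a · v a`, `0 ≤ v a`, `0 ≤ v'`
and `u' ≤ q · v'`, then `u ≤ q · v` on `[a, b]`, since for fixed `x` the function
`t ↦ q x · v t - u t` is increasing on `[a, x]`. Applied repeatedly, starting from
`f = q f⁽ⁿ⁻¹⁾` and using `(fᵏ f⁽ʲ⁾)' ≥ fᵏ f⁽ʲ⁺¹⁾`, it gives `Fᵏ f ≤ k! q fᵏ f⁽ⁿ⁻¹⁻ᵏ⁾`
for `k ≤ n - 2`, then `Fⁿ⁻¹ ≤ (n-2)! q fⁿ⁻¹` and `Fⁿ⁻¹ f ≤ (n-2)! q (fⁿ - f(a)ⁿ)`.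
The last bound says that the derivative of `(x - a) q(a) f(a)ⁿ + (n-1)/n! · Fⁿ`
is at most `q fⁿ = fⁿ⁺¹ / f⁽ⁿ⁻¹⁾`.
-/

open Set

theorem le_of_hasDerivAt_le_of_le_left {a b : ℝ} {f g f' g' : ℝ → ℝ}
    (hf : ContinuousOn f (Icc a b)) (hg : ContinuousOn g (Icc a b))
    (hf' : ∀ x ∈ Ioo a b, HasDerivAt f (f' x) x) (hg' : ∀ x ∈ Ioo a b, HasDerivAt g (g' x) x)
    (hle : ∀ x ∈ Ioo a b, f' x ≤ g' x) (ha : f a ≤ g a) :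
    ∀ x ∈ Icc a b, f x ≤ g x := by
  intro x hx
  have hmono : MonotoneOn (fun t => g t - f t) (Icc a b) := by
    refine monotoneOn_of_hasDerivWithinAt_nonneg (f' := fun t => g' t - f' t) (convex_Icc a b)
      (hg.sub hf) ?_ ?_ <;> rw [interior_Icc]
    · exact fun t ht => ((hg' t ht).sub (hf' t ht)).hasDerivWithinAt
    · exact fun t ht => sub_nonneg.2 (hle t ht)
  linarith [hmono (left_mem_Icc.2 (hx.1.trans hx.2)) hx hx.1]

theorem le_mul_of_hasDerivAt_le_mul {a b : ℝ} {q f g f' g' : ℝ → ℝ}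
    (hq : MonotoneOn q (Icc a b)) (hf : ContinuousOn f (Icc a b))
    (hg : ContinuousOn g (Icc a b)) (hf' : ∀ x ∈ Ioo a b, HasDerivAt f (f' x) x)
    (hg' : ∀ x ∈ Ioo a b, HasDerivAt g (g' x) x) (hg'_nonneg : ∀ x ∈ Ioo a b, 0 ≤ g' x)
    (hle : ∀ x ∈ Ioo a b, f' x ≤ q x * g' x) (ha : f a ≤ q a * g a) (hga : 0 ≤ g a) :
    ∀ x ∈ Icc a b, f x ≤ q x * g x := by
  intro x hx
  have hIcc : Icc a x ⊆ Icc a b := Icc_subset_Icc_right hx.2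
  have hIoo : Ioo a x ⊆ Ioo a b := Ioo_subset_Ioo_right hx.2
  have hqx : ∀ t ∈ Icc a x, q t ≤ q x := fun t ht => hq (hIcc ht) hx ht.2
  refine le_of_hasDerivAt_le_of_le_left (hf.mono hIcc)
    (continuousOn_const.mul (hg.mono hIcc)) (fun t ht => hf' t (hIoo ht))
    (fun t ht => (hg' t (hIoo ht)).const_mul (q x)) (fun t ht => ?_) ?_ x (right_mem_Icc.2 hx.1)
  · calc f' t ≤ q t * g' t := hle t (hIoo ht)
      _ ≤ q x * g' t :=
        mul_le_mul_of_nonneg_right (hqx t (Ioo_subset_Icc_self ht)) (hg'_nonneg t (hIoo ht))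
  · calc f a ≤ q a * g a := ha
      _ ≤ q x * g a := mul_le_mul_of_nonneg_right (hqx a (left_mem_Icc.2 hx.1)) hga

structure IsPrimitiveOn (F u : ℝ → ℝ) (a b : ℝ) : Prop where
  continuousOn : ContinuousOn F (Icc a b)
  hasDerivAt : ∀ x ∈ Ioo a b, HasDerivAt F (u x) x
  apply_left : F a = 0

theorem isPrimitiveOn_integral {u : ℝ → ℝ} {a b : ℝ} (hab : a ≤ b)
    (hu : ContinuousOn u (Icc a b)) : IsPrimitiveOn (fun x => ∫ t in a..x, u t) u a b where
  continuousOn := by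
    rw [← uIcc_of_le hab] at hu ⊢
    exact intervalIntegral.continuousOn_primitive_interval
      (hu.integrableOn_compact isCompact_uIcc)
  hasDerivAt x hx := by
    have hcont : ContinuousAt u x := hu.continuousAt (Icc_mem_nhds hx.1 hx.2)
    exact intervalIntegral.integral_hasDerivAt_right
      ((hu.mono (Icc_subset_Icc_right hx.2.le)).intervalIntegrable_of_Icc hx.1.le)
      ((hu.mono Ioo_subset_Icc_self).stronglyMeasurableAtFilter isOpen_Ioo x hx) hcont
  apply_left := intervalIntegral.integral_same

theorem hasDerivAt_iteratedDerivWithin_of_mem_nhds {f : ℝ → ℝ} {s : Set ℝ} {x : ℝ} {i : ℕ}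
    (hf : DifferentiableOn ℝ (iteratedDerivWithin i f s) s) (hs : s ∈ nhds x) :
    HasDerivAt (iteratedDerivWithin i f s) (iteratedDerivWithin (i + 1) f s x) x := by
  rw [iteratedDerivWithin_succ, derivWithin_of_mem_nhds hs]
  exact ((hf x (mem_of_mem_nhds hs)).differentiableAt hs).hasDerivAt

open scoped Nat

/-- The hypotheses of the theorem with `n = m + 2`: `d i` plays the role of `f⁽ⁱ⁾`, so that
`f = d 0`, and `q` that of `f / f⁽ⁿ⁻¹⁾`. -/
structure WeightedDerivChain (a b : ℝ) (m : ℕ) (q : ℝ → ℝ) (d : ℕ → ℝ → ℝ) : Prop where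
  le : a ≤ b
  continuousOn : ∀ i ≤ m + 1, ContinuousOn (d i) (Icc a b)
  hasDerivAt : ∀ i ≤ m, ∀ x ∈ Ioo a b, HasDerivAt (d i) (d (i + 1) x) x
  nonneg : ∀ i ≤ m + 1, ∀ x ∈ Icc a b, 0 ≤ d i x
  monotoneOn_weight : MonotoneOn q (Icc a b)
  weight_nonneg : ∀ x ∈ Icc a b, 0 ≤ q x
  eq_weight_mul : ∀ x ∈ Icc a b, d 0 x = q x * d (m + 1) x

namespace WeightedDerivChain

variable {a b : ℝ} {m : ℕ} {q F : ℝ → ℝ} {d : ℕ → ℝ → ℝ}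

theorem left_mem (h : WeightedDerivChain a b m q d) : a ∈ Icc a b := left_mem_Icc.2 h.le

theorem le_weight_mul_of_hasDerivAt (h : WeightedDerivChain a b m q d) {f g f' g' : ℝ → ℝ}
    (hf : ContinuousOn f (Icc a b)) (hg : ContinuousOn g (Icc a b))
    (hf' : ∀ x ∈ Ioo a b, HasDerivAt f (f' x) x) (hg' : ∀ x ∈ Ioo a b, HasDerivAt g (g' x) x)
    (hg'_nonneg : ∀ x ∈ Ioo a b, 0 ≤ g' x) (hle : ∀ x ∈ Ioo a b, f' x ≤ q x * g' x)
    (hfa : f a = 0) (hga : 0 ≤ g a) :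
    ∀ x ∈ Icc a b, f x ≤ q x * g x :=
  le_mul_of_hasDerivAt_le_mul h.monotoneOn_weight hf hg hf' hg' hg'_nonneg hle
    (hfa ▸ mul_nonneg (h.weight_nonneg a h.left_mem) hga) hga

theorem primitive_pow_succ_le (h : WeightedDerivChain a b m q d)
    (hF : IsPrimitiveOn F (d 0) a b)
    {k : ℕ} (hk : k + 1 ≤ m)
    (hprev : ∀ x ∈ Icc a b, F x ^ k * d 0 x ≤ q x * (k ! * (d 0 x ^ k * d (m - k + 1) x))) :
    ∀ x ∈ Icc a b, F x ^ (k + 1) ≤ q x * ((k + 1)! * (d 0 x ^ k * d (m - k) x)) := by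
  refine h.le_weight_mul_of_hasDerivAt (hF.continuousOn.pow _)
    (continuousOn_const.mul (((h.continuousOn 0 (by omega)).pow _).mul
      (h.continuousOn _ (by omega))))
    (fun t ht => (hF.hasDerivAt t ht).fun_pow (k + 1))
    (fun t ht => (((h.hasDerivAt 0 (by omega) t ht).fun_pow k).mul
      (h.hasDerivAt (m - k) (by omega) t ht)).const_mul _) (fun t ht => ?_) (fun t ht => ?_)
    (by simp [hF.apply_left]) ?_
  · have ht' := Ioo_subset_Icc_self ht
    have := h.nonneg 0 (by omega) t ht'
    have := h.nonneg 1 (by omega) t ht'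
    have := h.nonneg (m - k) (by omega) t ht'
    have := h.nonneg (m - k + 1) (by omega) t ht'
    positivity
  · have ht' := Ioo_subset_Icc_self ht
    have := h.nonneg 0 (by omega) t ht'
    have := h.nonneg 1 (by omega) t ht'
    have := h.nonneg (m - k) (by omega) t ht'
    have := h.weight_nonneg t ht'
    have hdrop : 0 ≤ q t * ((k + 1)! * (k * d 0 t ^ (k - 1) * d 1 t * d (m - k) t)) := by
      positivity
    rw [Nat.add_sub_cancel]
    push_cast [Nat.factorial_succ] at hdrop ⊢
    linarith [mul_le_mul_of_nonneg_left (hprev t ht') (by positivity : (0 : ℝ) ≤ k + 1)]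
  · have := h.nonneg 0 (by omega) a h.left_mem
    have := h.nonneg (m - k) (by omega) a h.left_mem
    positivity

theorem primitive_pow_mul_le (h : WeightedDerivChain a b m q d)
    (hF : IsPrimitiveOn F (d 0) a b)
    {k : ℕ} (hk : k ≤ m) :
    ∀ x ∈ Icc a b, F x ^ k * d 0 x ≤ q x * (k ! * (d 0 x ^ k * d (m + 1 - k) x)) := by
  induction k with
  | zero => intro x hx; simp [h.eq_weight_mul x hx]
  | succ k ih =>
    have hprev := ih (by omega)
    rw [show m + 1 - k = m - k + 1 by omega] at hprev
    intro x hx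
    calc F x ^ (k + 1) * d 0 x ≤ q x * ((k + 1)! * (d 0 x ^ k * d (m - k) x)) * d 0 x :=
          mul_le_mul_of_nonneg_right (h.primitive_pow_succ_le hF hk hprev x hx)
            (h.nonneg 0 (by omega) x hx)
      _ = q x * ((k + 1)! * (d 0 x ^ (k + 1) * d (m + 1 - (k + 1)) x)) := by
          rw [show m + 1 - (k + 1) = m - k by omega]; ring

theorem primitive_pow_le (h : WeightedDerivChain a b m q d)
    (hF : IsPrimitiveOn F (d 0) a b) :
    ∀ x ∈ Icc a b, F x ^ (m + 1) ≤ q x * (m ! * d 0 x ^ (m + 1)) := by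
  refine h.le_weight_mul_of_hasDerivAt (hF.continuousOn.pow _)
    (continuousOn_const.mul ((h.continuousOn 0 (by omega)).pow _))
    (fun t ht => (hF.hasDerivAt t ht).fun_pow (m + 1))
    (fun t ht => ((h.hasDerivAt 0 (by omega) t ht).fun_pow (m + 1)).const_mul _)
    (fun t ht => ?_) (fun t ht => ?_) (by simp [hF.apply_left]) ?_
  · have ht' := Ioo_subset_Icc_self ht
    have := h.nonneg 0 (by omega) t ht'
    have := h.nonneg 1 (by omega) t ht'
    positivity
  · have hprev := h.primitive_pow_mul_le hF le_rfl t (Ioo_subset_Icc_self ht)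
    rw [Nat.add_sub_cancel_left] at hprev
    rw [Nat.add_sub_cancel, zero_add]
    push_cast
    linarith [mul_le_mul_of_nonneg_left hprev (by positivity : (0 : ℝ) ≤ m + 1)]
  · have := h.nonneg 0 (by omega) a h.left_mem
    positivity

theorem primitive_pow_mul_le_sub (h : WeightedDerivChain a b m q d)
    (hF : IsPrimitiveOn F (d 0) a b) :
    ∀ x ∈ Icc a b, F x ^ (m + 1) * d 0 x ≤ q x * (m ! * (d 0 x ^ (m + 2) - d 0 a ^ (m + 2))) := by
  refine h.le_weight_mul_of_hasDerivAt
    ((hF.continuousOn.pow _).mul (h.continuousOn 0 (by omega)))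
    (continuousOn_const.mul (((h.continuousOn 0 (by omega)).pow _).sub continuousOn_const))
    (fun t ht => ((hF.hasDerivAt t ht).fun_pow (m + 1)).mul (h.hasDerivAt 0 (by omega) t ht))
    (fun t ht => (((h.hasDerivAt 0 (by omega) t ht).fun_pow (m + 2)).sub_const _).const_mul _)
    (fun t ht => ?_) (fun t ht => ?_) (by simp [hF.apply_left]) (by simp)
  · have ht' := Ioo_subset_Icc_self ht
    have := h.nonneg 0 (by omega) t ht'
    have := h.nonneg 1 (by omega) t ht'
    positivity
  · have ht' := Ioo_subset_Icc_self ht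
    have hprev := h.primitive_pow_mul_le hF le_rfl t ht'
    rw [Nat.add_sub_cancel_left] at hprev
    have hpow := h.primitive_pow_le hF t ht'
    have := h.nonneg 0 (by omega) t ht'
    have := h.nonneg 1 (by omega) t ht'
    have h1 := mul_le_mul_of_nonneg_left hprev (by positivity : (0 : ℝ) ≤ (m + 1) * d 0 t)
    have h2 := mul_le_mul_of_nonneg_right hpow (h.nonneg 1 (by omega) t ht')
    rw [Nat.add_sub_cancel, zero_add]
    push_cast
    simp only [pow_succ] at h1 h2 ⊢
    linarith

theorem add_primitive_pow_div_le (h : WeightedDerivChain a b m q d)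
    (hF : IsPrimitiveOn F (d 0) a b)
    {G : ℝ → ℝ} (hG : IsPrimitiveOn G (fun x => q x * d 0 x ^ (m + 2)) a b) :
    (b - a) * (q a * d 0 a ^ (m + 2)) + F b ^ (m + 2) / ((m + 2) * m !) ≤ G b := by
  set c := q a * d 0 a ^ (m + 2)
  have hc : ∀ x, HasDerivAt (fun x => (x - a) * c) c x := fun x => by
    simpa using ((hasDerivAt_id x).sub_const a).mul_const c
  refine le_of_hasDerivAt_le_of_le_left
    ((continuous_sub_right a |>.mul continuous_const).continuousOn.add
      ((hF.continuousOn.pow _).div_const _)) hG.continuousOn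
    (fun t ht => (hc t).add (((hF.hasDerivAt t ht).fun_pow (m + 2)).div_const _))
    hG.hasDerivAt (fun t ht => ?_) (by simp [hF.apply_left, hG.apply_left]) b
    (right_mem_Icc.2 h.le)
  have ht' := Ioo_subset_Icc_self ht
  have hK := h.primitive_pow_mul_le_sub hF t ht'
  have hqa : q a ≤ q t := h.monotoneOn_weight h.left_mem ht' ht.1.le
  have := h.nonneg 0 (by omega) a h.left_mem
  have hfac : (0 : ℝ) < m ! := by positivity
  have hcancel : ((m + 2 : ℕ) : ℝ) * F t ^ (m + 2 - 1) * d 0 t / ((m + 2) * m !) =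
      F t ^ (m + 1) * d 0 t / m ! := by
    rw [show m + 2 - 1 = m + 1 by omega]; push_cast; field_simp
  have hX : F t ^ (m + 1) * d 0 t / m ! ≤ q t * (d 0 t ^ (m + 2) - d 0 a ^ (m + 2)) := by
    rw [div_le_iff₀ hfac]; linarith
  rw [hcancel]
  nlinarith [mul_le_mul_of_nonneg_right hqa (pow_nonneg this (m + 2))]

end WeightedDerivChain

theorem weightedDerivChain_iteratedDerivWithin {a b : ℝ} (hab : a ≤ b) {m : ℕ} {f : ℝ → ℝ}
    (hf_nonneg : ∀ x ∈ Icc a b, 0 ≤ f x)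
    (hf_diff : ∀ i ≤ m, DifferentiableOn ℝ (iteratedDerivWithin i f (Icc a b)) (Icc a b))
    (hf_deriv_nonneg : ∀ i, 1 ≤ i → i ≤ m → ∀ x ∈ Icc a b,
      0 ≤ iteratedDerivWithin i f (Icc a b) x)
    (hf_deriv_pos : ∀ x ∈ Icc a b, 0 < iteratedDerivWithin (m + 1) f (Icc a b) x)
    (hf_cont : ContinuousOn (iteratedDerivWithin (m + 1) f (Icc a b)) (Icc a b))
    (hquot_mono : MonotoneOn
      (fun x => f x / iteratedDerivWithin (m + 1) f (Icc a b) x) (Icc a b)) :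
    WeightedDerivChain a b m (fun x => f x / iteratedDerivWithin (m + 1) f (Icc a b) x)
      (fun i => iteratedDerivWithin i f (Icc a b)) where
  le := hab
  continuousOn i hi := by
    rcases hi.eq_or_lt with rfl | him
    · exact hf_cont
    · exact (hf_diff i (by omega)).continuousOn
  hasDerivAt i hi x hx :=
    hasDerivAt_iteratedDerivWithin_of_mem_nhds (hf_diff i hi) (Icc_mem_nhds hx.1 hx.2)
  nonneg i hi x hx := by
    rcases Nat.eq_zero_or_pos i with rfl | hi0
    · simpa using hf_nonneg x hx
    rcases hi.eq_or_lt with rfl | him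
    · exact (hf_deriv_pos x hx).le
    · exact hf_deriv_nonneg i hi0 (by omega) x hx
  monotoneOn_weight := hquot_mono
  weight_nonneg x hx := div_nonneg (hf_nonneg x hx) (hf_deriv_pos x hx).le
  eq_weight_mul x hx := by
    simp [div_mul_cancel₀ _ (hf_deriv_pos x hx).ne']

theorem stmt18 (a b : ℝ) (hab : a < b) (n : ℕ) (hn : 2 ≤ n)
    (f : ℝ → ℝ) (hf_pos : ∀ x ∈ Set.Icc a b, 0 < f x)
    (hf_diff : ∀ i < n,
      DifferentiableOn ℝ (iteratedDerivWithin i f (Set.Icc a b)) (Set.Icc a b))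
    (hf_nonneg : ∀ i, 1 ≤ i → i ≤ n - 2 → ∀ x ∈ Set.Icc a b,
      0 ≤ iteratedDerivWithin i f (Set.Icc a b) x)
    (hf_pos' : ∀ x ∈ Set.Icc a b, 0 < iteratedDerivWithin (n - 1) f (Set.Icc a b) x)
    (hquot_mono : MonotoneOn
      (fun x => f x / iteratedDerivWithin (n - 1) f (Set.Icc a b) x) (Set.Icc a b)) :
    (b - a) * f a ^ (n + 1) / iteratedDerivWithin (n - 1) f (Set.Icc a b) a +
      (((n : ℝ) - 1) / (n.factorial : ℝ)) * (∫ x in a..b, f x) ^ n ≤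
    ∫ x in a..b, f x ^ (n + 1) / iteratedDerivWithin (n - 1) f (Set.Icc a b) x := by
  obtain ⟨m, rfl⟩ : ∃ m, n = m + 2 := ⟨n - 2, by omega⟩
  simp only [show m + 2 - 1 = m + 1 from rfl, Nat.add_sub_cancel]
    at hf_nonneg hf_pos' hquot_mono ⊢
  set g := iteratedDerivWithin (m + 1) f (Icc a b)
  have hfc : ContinuousOn f (Icc a b) := (hf_diff 0 (by omega)).continuousOn
  have hgc : ContinuousOn g (Icc a b) := (hf_diff (m + 1) (by omega)).continuousOn
  have hchain := weightedDerivChain_iteratedDerivWithin hab.le (fun x hx => (hf_pos x hx).le)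
    (fun i hi => hf_diff i (by omega)) hf_nonneg hf_pos' hgc hquot_mono
  have hF := isPrimitiveOn_integral hab.le hfc
  have hG := isPrimitiveOn_integral (u := fun x => f x / g x * f x ^ (m + 2)) hab.le
    ((hfc.div hgc fun x hx => (hf_pos' x hx).ne').mul (hfc.pow _))
  have key := hchain.add_primitive_pow_div_le (by simpa using hF) (by simpa using hG)
  have hconst : (((m + 2 : ℕ) : ℝ) - 1) / ((m + 2)! : ℝ) = 1 / ((m + 2) * m !) := by
    push_cast [Nat.factorial_succ]; field_simp; ring
  calc _ = (b - a) * (f a / g a * f a ^ (m + 2)) +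
        (∫ x in a..b, f x) ^ (m + 2) / ((m + 2) * m !) := by rw [hconst]; ring
    _ ≤ _ := by simpa using key
    _ = _ := by congr 1; funext x; ring
end

section
/- Let n ≥ 2, k ∈ {1,…,n-1}, and let f : [a,b] → ℝ be k-times differentiable with f⁽ⁱ⁾ ≥ 0 for i = 0,…,k-1. Let g : [a,b] → ℝ be continuous and increasing with g ≥ 0, and let h belong to D₊[a,b] or D₋[a,b] be increasing and strictly positive. Suppose f⁽ᵏ⁾(x) ≥ (x-a)^{n-k-1}·h(x)·(n-1)!/(n-k-1)! for all x ∈ [a,b]. Then (b-a)·f(a)^{n+1}·g(a)ⁿ·h(a)^{n-1} + (∫_a^b f·g·h)ⁿ ≤ ∫_a^b f^{n+1}·gⁿ·h^{n-1}. -/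
open Set

theorem le_of_hasDerivWithinAt_Icc_of_deriv_le {φ ψ φ' ψ' : ℝ → ℝ} {a b x : ℝ}
    (hx : x ∈ Icc a b)
    (hφ : ∀ y ∈ Icc a b, HasDerivWithinAt φ (φ' y) (Icc a b) y)
    (hψ : ∀ y ∈ Icc a b, HasDerivWithinAt ψ (ψ' y) (Icc a b) y)
    (ha : φ a ≤ ψ a) (hle : ∀ y ∈ Ico a x, φ' y ≤ ψ' y) : φ x ≤ ψ x := by
  have hsub : Icc a x ⊆ Icc a b := Icc_subset_Icc_right hx.2
  have cont : ∀ {χ χ' : ℝ → ℝ}, (∀ y ∈ Icc a b, HasDerivWithinAt χ (χ' y) (Icc a b) y) →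
      ContinuousOn χ (Icc a x) := fun hχ y hy =>
    (hχ y (hsub hy)).continuousWithinAt.mono hsub
  have right : ∀ {χ χ' : ℝ → ℝ}, (∀ y ∈ Icc a b, HasDerivWithinAt χ (χ' y) (Icc a b) y) →
      ∀ y ∈ Ico a x, HasDerivWithinAt χ (χ' y) (Ici y) y := fun hχ y hy =>
    (hχ y (hsub (Ico_subset_Icc_self hy))).mono_of_mem_nhdsWithin
      (Icc_mem_nhdsGE_of_mem ⟨hy.1, hy.2.trans_le hx.2⟩)
  exact image_le_of_deriv_right_le_deriv_boundary (cont hφ) (right hφ) ha (cont hψ) (right hψ)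
    hle (right_mem_Icc.2 hx.1)

theorem nonneg_of_hasDerivWithinAt_nonneg {E e : ℝ → ℝ} {a b x : ℝ}
    (hE : ∀ y ∈ Icc a b, HasDerivWithinAt E (e y) (Icc a b) y) (hE0 : E a = 0)
    (he : ∀ y ∈ Icc a b, 0 ≤ e y) (hx : x ∈ Icc a b) : 0 ≤ E x :=
  le_of_hasDerivWithinAt_Icc_of_deriv_le (φ := fun _ => 0) hx
    (fun y _ => hasDerivWithinAt_const y _ 0) hE hE0.ge
    fun y hy => he y ⟨hy.1, hy.2.le.trans hx.2⟩

theorem le_sub_mul_of_hasDerivWithinAt {E e : ℝ → ℝ} {a b x : ℝ}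
    (hE : ∀ y ∈ Icc a b, HasDerivWithinAt E (e y) (Icc a b) y) (hE0 : E a = 0)
    (he : MonotoneOn e (Icc a b)) (hx : x ∈ Icc a b) : E x ≤ (x - a) * e x := by
  refine le_of_hasDerivWithinAt_Icc_of_deriv_le (ψ := fun y => (y - a) * e x) hx hE
    (fun y _ => ((hasDerivWithinAt_id y _).sub_const a).mul_const (e x)) (by simp [hE0])
    fun y hy => ?_
  rw [one_mul]
  exact he ⟨hy.1, hy.2.le.trans hx.2⟩ hx hy.2.le

theorem le_mul_of_hasDerivWithinAt {E e F g : ℝ → ℝ} {a b x : ℝ}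
    (hE : ∀ y ∈ Icc a b, HasDerivWithinAt E (e y) (Icc a b) y) (hE0 : E a = 0)
    (hF : ∀ y ∈ Icc a b, HasDerivWithinAt F (g y * e y) (Icc a b) y) (hF0 : F a = 0)
    (he : ∀ y ∈ Icc a b, 0 ≤ e y) (hg : MonotoneOn g (Icc a b)) (hx : x ∈ Icc a b) :
    F x ≤ g x * E x := by
  refine le_of_hasDerivWithinAt_Icc_of_deriv_le (ψ := fun y => g x * E y) hx hF
    (fun y hy => (hE y hy).const_mul (g x)) (by simp [hE0, hF0]) fun y hy => ?_
  have hy' : y ∈ Icc a b := ⟨hy.1, hy.2.le.trans hx.2⟩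
  exact mul_le_mul_of_nonneg_right (hg hy' hx hy.2.le) (he y hy')

theorem hasDerivWithinAt_integral_Icc {u : ℝ → ℝ} {a b y : ℝ} (hu : ContinuousOn u (Icc a b))
    (hy : y ∈ Icc a b) :
    HasDerivWithinAt (fun t => ∫ s in a..t, u s) (u y) (Icc a b) y := by
  have : Fact (y ∈ Icc a b) := ⟨hy⟩
  exact intervalIntegral.integral_hasDerivWithinAt_right
    ((hu.mono (Icc_subset_Icc_right hy.2)).intervalIntegrable_of_Icc hy.1)
    (hu.stronglyMeasurableAtFilter_nhdsWithin measurableSet_Icc y) (hu y hy)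

theorem hasDerivWithinAt_iteratedDerivWithin {f : ℝ → ℝ} {s : Set ℝ} {i : ℕ} {y : ℝ}
    (hf : DifferentiableOn ℝ (iteratedDerivWithin i f s) s) (hy : y ∈ s) :
    HasDerivWithinAt (iteratedDerivWithin i f s) (iteratedDerivWithin (i + 1) f s y) s y := by
  rw [iteratedDerivWithin_succ]
  exact (hf y hy).hasDerivWithinAt

theorem mul_pow_le_mul_pow_of_hasDerivWithinAt {E e A A' h : ℝ → ℝ} {a b c : ℝ} (m : ℕ)
    (hE : ∀ y ∈ Icc a b, HasDerivWithinAt E (e y) (Icc a b) y) (hE0 : E a = 0)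
    (hA : ∀ y ∈ Icc a b, HasDerivWithinAt A (A' y) (Icc a b) y) (hA0 : 0 ≤ A a)
    (hA' : ∀ y ∈ Icc a b, 0 ≤ A' y) (hh : MonotoneOn h (Icc a b))
    (hh0 : ∀ y ∈ Icc a b, 0 ≤ h y)
    (hle : ∀ y ∈ Icc a b, c * (m + 1) * E y ^ m * e y ≤ A' y * h y ^ m)
    {x : ℝ} (hx : x ∈ Icc a b) : c * E x ^ (m + 1) ≤ A x * h x ^ m := by
  -- `h` is frozen at its value at `x`, so it never has to be differentiated
  refine le_of_hasDerivWithinAt_Icc_of_deriv_le (φ := fun y => c * E y ^ (m + 1))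
    (ψ := fun y => A y * h x ^ m) hx (fun y hy => ((hE y hy).pow (m + 1)).const_mul c)
    (fun y hy => (hA y hy).mul_const _) ?_ fun y hy => ?_
  · simpa [hE0] using mul_nonneg hA0 (pow_nonneg (hh0 x hx) m)
  · have hy' : y ∈ Icc a b := ⟨hy.1, hy.2.le.trans hx.2⟩
    calc c * ((m + 1 : ℕ) * E y ^ (m + 1 - 1) * e y) = c * (m + 1) * E y ^ m * e y := by
          push_cast; ring_nf
      _ ≤ A' y * h y ^ m := hle y hy'
      _ ≤ A' y * h x ^ m := by
          gcongr
          · exact hA' y hy'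
          · exact hh0 y hy'
          · exact hh hy' hx hy.2.le

theorem mul_pow_mul_le_of_growth {E f h d : ℝ → ℝ} {a b c : ℝ} (m : ℕ) (hc : 0 ≤ c)
    (hE : ∀ y ∈ Icc a b, HasDerivWithinAt E (f y * h y) (Icc a b) y) (hE0 : E a = 0)
    (hf : MonotoneOn f (Icc a b)) (hf0 : ∀ y ∈ Icc a b, 0 ≤ f y)
    (hh : MonotoneOn h (Icc a b)) (hh0 : ∀ y ∈ Icc a b, 0 ≤ h y)
    (hd : ∀ y ∈ Icc a b, (y - a) ^ m * h y * c ≤ d y) {x : ℝ} (hx : x ∈ Icc a b) :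
    c * E x ^ m * h x ≤ f x ^ m * d x * h x ^ m := by
  have hEx := le_sub_mul_of_hasDerivWithinAt hE hE0 (hf.mul hh hf0 hh0) hx
  have hEx0 := nonneg_of_hasDerivWithinAt_nonneg hE hE0
    (fun y hy => mul_nonneg (hf0 y hy) (hh0 y hy)) hx
  calc c * E x ^ m * h x ≤ c * ((x - a) * (f x * h x)) ^ m * h x := by
        gcongr; exact hh0 x hx
    _ = ((x - a) ^ m * h x * c) * (f x ^ m * h x ^ m) := by rw [mul_pow, mul_pow]; ring
    _ ≤ d x * (f x ^ m * h x ^ m) :=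
        mul_le_mul_of_nonneg_right (hd x hx)
          (mul_nonneg (pow_nonneg (hf0 x hx) m) (pow_nonneg (hh0 x hx) m))
    _ = f x ^ m * d x * h x ^ m := by ring

theorem mul_pow_mul_le_of_hasDerivWithinAt {E f f' D D' h : ℝ → ℝ} {a b c : ℝ} (m : ℕ)
    (hE : ∀ y ∈ Icc a b, HasDerivWithinAt E (f y * h y) (Icc a b) y) (hE0 : E a = 0)
    (hf : ∀ y ∈ Icc a b, HasDerivWithinAt f (f' y) (Icc a b) y)
    (hD : ∀ y ∈ Icc a b, HasDerivWithinAt D (D' y) (Icc a b) y)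
    (hf0 : ∀ y ∈ Icc a b, 0 ≤ f y) (hf'0 : ∀ y ∈ Icc a b, 0 ≤ f' y)
    (hD0 : ∀ y ∈ Icc a b, 0 ≤ D y) (hD'0 : ∀ y ∈ Icc a b, 0 ≤ D' y)
    (hh : MonotoneOn h (Icc a b)) (hh0 : ∀ y ∈ Icc a b, 0 ≤ h y)
    (ih : ∀ y ∈ Icc a b, c * E y ^ m * h y ≤ f y ^ m * D' y * h y ^ m)
    {x : ℝ} (hx : x ∈ Icc a b) :
    c / (m + 1) * E x ^ (m + 1) * h x ≤ f x ^ (m + 1) * D x * h x ^ (m + 1) := by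
  have ha : a ∈ Icc a b := ⟨le_rfl, hx.1.trans hx.2⟩
  have hA' : ∀ y ∈ Icc a b, 0 ≤ (m + 1 : ℕ) * f y ^ (m + 1 - 1) * f' y * D y := fun y hy =>
    mul_nonneg (mul_nonneg (mul_nonneg (Nat.cast_nonneg _) (pow_nonneg (hf0 y hy) _))
      (hf'0 y hy)) (hD0 y hy)
  have key : c / (m + 1) * E x ^ (m + 1) ≤ f x ^ (m + 1) * D x * h x ^ m := by
    refine mul_pow_le_mul_pow_of_hasDerivWithinAt (A := fun y => f y ^ (m + 1) * D y) m hE hE0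
      (fun y hy => ((hf y hy).pow (m + 1)).mul (hD y hy))
      (mul_nonneg (pow_nonneg (hf0 a ha) _) (hD0 a ha))
      (fun y hy => add_nonneg (hA' y hy) (mul_nonneg (pow_nonneg (hf0 y hy) _) (hD'0 y hy)))
      hh hh0 (fun y hy => ?_) hx
    calc c / (m + 1) * (m + 1) * E y ^ m * (f y * h y) = (c * E y ^ m * h y) * f y := by
          field_simp
      _ ≤ (f y ^ m * D' y * h y ^ m) * f y := mul_le_mul_of_nonneg_right (ih y hy) (hf0 y hy)
      _ ≤ ((m + 1 : ℕ) * f y ^ (m + 1 - 1) * f' y * D y + f y ^ (m + 1) * D' y) * h y ^ m := by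
          rw [add_mul, show f y ^ m * D' y * h y ^ m * f y = f y ^ (m + 1) * D' y * h y ^ m by ring]
          exact le_add_of_nonneg_left (mul_nonneg (hA' y hy) (pow_nonneg (hh0 y hy) m))
  calc c / (m + 1) * E x ^ (m + 1) * h x ≤ f x ^ (m + 1) * D x * h x ^ m * h x := by
        gcongr; exact hh0 x hx
    _ = f x ^ (m + 1) * D x * h x ^ (m + 1) := by ring

theorem factorial_div_mul_pow_mul_le {D : ℕ → ℝ → ℝ} {E h : ℝ → ℝ} {a b : ℝ} {N k : ℕ}
    (hkN : k ≤ N)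
    (hD : ∀ i < k, ∀ y ∈ Icc a b, HasDerivWithinAt (D i) (D (i + 1) y) (Icc a b) y)
    (hD0 : ∀ i ≤ k, ∀ y ∈ Icc a b, 0 ≤ D i y) (hmono : MonotoneOn (D 0) (Icc a b))
    (hE : ∀ y ∈ Icc a b, HasDerivWithinAt E (D 0 y * h y) (Icc a b) y) (hE0 : E a = 0)
    (hh : MonotoneOn h (Icc a b)) (hh0 : ∀ y ∈ Icc a b, 0 ≤ h y)
    (hgrowth : ∀ y ∈ Icc a b,
      (y - a) ^ (N - k) * h y * N.factorial / (N - k).factorial ≤ D k y)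
    {j : ℕ} (hj : j ≤ k) {x : ℝ} (hx : x ∈ Icc a b) :
    (N.factorial / (N - j).factorial : ℝ) * E x ^ (N - j) * h x ≤
      D 0 x ^ (N - j) * D j x * h x ^ (N - j) := by
  induction hj using Nat.decreasingInduction generalizing x with
  | self =>
    refine mul_pow_mul_le_of_growth _ (by positivity) hE hE0 hmono (hD0 0 (Nat.zero_le _)) hh hh0
      (fun y hy => ?_) hx
    rw [← mul_div_assoc]
    exact hgrowth y hy
  | of_succ j hjk ih =>
    obtain ⟨m, hm⟩ : ∃ m, N - (j + 1) = m := ⟨_, rfl⟩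
    have hcoef : (N.factorial / (m + 1).factorial : ℝ) = N.factorial / m.factorial / (m + 1) := by
      rw [Nat.factorial_succ]; push_cast; field_simp
    rw [show N - j = m + 1 by omega, hcoef]
    exact mul_pow_mul_le_of_hasDerivWithinAt m hE hE0 (hD 0 (by omega)) (hD j hjk)
      (hD0 0 (by omega)) (hD0 1 (by omega)) (hD0 j hjk.le) (hD0 (j + 1) hjk) hh hh0
      (fun y hy => hm ▸ ih hy) hx

theorem mul_pow_le_sub_pow_mul_pow {E f f' h : ℝ → ℝ} {a b : ℝ} (M : ℕ)
    (hE : ∀ y ∈ Icc a b, HasDerivWithinAt E (f y * h y) (Icc a b) y) (hE0 : E a = 0)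
    (hf : ∀ y ∈ Icc a b, HasDerivWithinAt f (f' y) (Icc a b) y)
    (hf0 : ∀ y ∈ Icc a b, 0 ≤ f y) (hf'0 : ∀ y ∈ Icc a b, 0 ≤ f' y)
    (hh : MonotoneOn h (Icc a b)) (hh0 : ∀ y ∈ Icc a b, 0 ≤ h y)
    (key : ∀ y ∈ Icc a b, (M + 1) * E y ^ M * h y ≤ f y ^ M * f' y * h y ^ M)
    {x : ℝ} (hx : x ∈ Icc a b) :
    (M + 2) * E x ^ (M + 1) ≤ (f x ^ (M + 2) - f a ^ (M + 2)) * h x ^ M := by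
  refine mul_pow_le_mul_pow_of_hasDerivWithinAt (A := fun y => f y ^ (M + 2) - f a ^ (M + 2)) M
    hE hE0 (fun y hy => ((hf y hy).pow (M + 2)).sub_const _) (by simp)
    (fun y hy => mul_nonneg (mul_nonneg (Nat.cast_nonneg _) (pow_nonneg (hf0 y hy) _))
      (hf'0 y hy)) hh hh0 (fun y hy => ?_) hx
  calc ((M : ℝ) + 2) * (M + 1) * E y ^ M * (f y * h y)
      = ((M + 2) * f y) * ((M + 1) * E y ^ M * h y) := by ring
    _ ≤ ((M + 2) * f y) * (f y ^ M * f' y * h y ^ M) :=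
        mul_le_mul_of_nonneg_left (key y hy) (mul_nonneg (by positivity) (hf0 y hy))
    _ = (M + 2 : ℕ) * f y ^ (M + 2 - 1) * f' y * h y ^ M := by push_cast; ring

theorem sub_mul_add_pow_le_of_hasDerivWithinAt {E F G f g h : ℝ → ℝ} {a b : ℝ} (hab : a ≤ b)
    (M : ℕ)
    (hE : ∀ y ∈ Icc a b, HasDerivWithinAt E (f y * h y) (Icc a b) y) (hE0 : E a = 0)
    (hF : ∀ y ∈ Icc a b, HasDerivWithinAt F (f y * g y * h y) (Icc a b) y) (hF0 : F a = 0)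
    (hG : ∀ y ∈ Icc a b,
      HasDerivWithinAt G (f y ^ (M + 3) * g y ^ (M + 2) * h y ^ (M + 1)) (Icc a b) y)
    (hG0 : G a = 0)
    (hf : MonotoneOn f (Icc a b)) (hf0 : ∀ y ∈ Icc a b, 0 ≤ f y)
    (hg : MonotoneOn g (Icc a b)) (hg0 : ∀ y ∈ Icc a b, 0 ≤ g y)
    (hh : MonotoneOn h (Icc a b)) (hh0 : ∀ y ∈ Icc a b, 0 ≤ h y)
    (hEf : ∀ y ∈ Icc a b, (M + 2) * E y ^ (M + 1) ≤ (f y ^ (M + 2) - f a ^ (M + 2)) * h y ^ M) :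
    (b - a) * f a ^ (M + 3) * g a ^ (M + 2) * h a ^ (M + 1) + F b ^ (M + 2) ≤ G b := by
  have ha : a ∈ Icc a b := ⟨le_rfl, hab⟩
  set C := f a ^ (M + 3) * g a ^ (M + 2) * h a ^ (M + 1)
  have hfh0 : ∀ y ∈ Icc a b, 0 ≤ f y * h y := fun y hy => mul_nonneg (hf0 y hy) (hh0 y hy)
  have hF' : ∀ y ∈ Icc a b, HasDerivWithinAt F (g y * (f y * h y)) (Icc a b) y := fun y hy =>
    (hF y hy).congr_deriv (by ring)
  have hFgE : ∀ y ∈ Icc a b, F y ≤ g y * E y := fun y hy =>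
    le_mul_of_hasDerivWithinAt hE hE0 hF' hF0 hfh0 hg hy
  have hF0' : ∀ y ∈ Icc a b, 0 ≤ F y := fun y hy =>
    nonneg_of_hasDerivWithinAt_nonneg hF' hF0 (fun z hz => mul_nonneg (hg0 z hz) (hfh0 z hz)) hy
  have := le_of_hasDerivWithinAt_Icc_of_deriv_le (φ := fun t => F t ^ (M + 2) + (t - a) * C)
    (right_mem_Icc.2 hab)
    (fun y hy => ((hF y hy).pow (M + 2)).add (((hasDerivWithinAt_id y _).sub_const a).mul_const C))
    hG (by simp [hF0, hG0]) fun y hy => ?_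
  · linarith
  have hy : y ∈ Icc a b := Ico_subset_Icc_self hy
  have hC : C ≤ f a ^ (M + 2) * (f y * g y ^ (M + 2) * h y ^ (M + 1)) := by
    have hay := hy.1
    have hg' := pow_le_pow_left₀ (hg0 a ha) (hg ha hy hay) (M + 2)
    have hh' := pow_le_pow_left₀ (hh0 a ha) (hh ha hy hay) (M + 1)
    calc C = f a ^ (M + 2) * (f a * g a ^ (M + 2) * h a ^ (M + 1)) := by ring
      _ ≤ f a ^ (M + 2) * (f y * g y ^ (M + 2) * h y ^ (M + 1)) := by
        refine mul_le_mul_of_nonneg_left ?_ (pow_nonneg (hf0 a ha) _)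
        exact mul_le_mul (mul_le_mul (hf ha hy hay) hg' (pow_nonneg (hg0 a ha) _) (hf0 y hy)) hh'
          (pow_nonneg (hh0 a ha) _) (mul_nonneg (hf0 y hy) (pow_nonneg (hg0 y hy) _))
  have hFpow : (M + 2 : ℕ) * F y ^ (M + 1) * (f y * g y * h y) ≤
      f y ^ (M + 3) * g y ^ (M + 2) * h y ^ (M + 1)
        - f a ^ (M + 2) * (f y * g y ^ (M + 2) * h y ^ (M + 1)) := by
    have hfgh := mul_nonneg (mul_nonneg (hf0 y hy) (hg0 y hy)) (hh0 y hy)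
    calc (M + 2 : ℕ) * F y ^ (M + 1) * (f y * g y * h y)
        ≤ (M + 2 : ℕ) * (g y * E y) ^ (M + 1) * (f y * g y * h y) := by
          gcongr
          exacts [hF0' y hy, hFgE y hy]
      _ = ((M + 2) * E y ^ (M + 1)) * (f y * h y * g y ^ (M + 2)) := by push_cast; ring
      _ ≤ ((f y ^ (M + 2) - f a ^ (M + 2)) * h y ^ M) * (f y * h y * g y ^ (M + 2)) :=
          mul_le_mul_of_nonneg_right (hEf y hy)
            (mul_nonneg (hfh0 y hy) (pow_nonneg (hg0 y hy) _))
      _ = _ := by ring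
  simp only [show M + 2 - 1 = M + 1 from rfl, one_mul]
  linarith

theorem stmt19_general (a b : ℝ) (hab : a < b) (n k : ℕ)
    (hk1 : 1 ≤ k) (hk2 : k ≤ n - 1)
    (f : ℝ → ℝ)
    (hf_diff : ∀ i < k,
      DifferentiableOn ℝ (iteratedDerivWithin i f (Set.Icc a b)) (Set.Icc a b))
    (hf_nonneg : ∀ i ≤ k - 1, ∀ x ∈ Set.Icc a b,
      0 ≤ iteratedDerivWithin i f (Set.Icc a b) x)
    (g : ℝ → ℝ) (hg_cont : ContinuousOn g (Set.Icc a b))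
    (hg_mono : MonotoneOn g (Set.Icc a b))
    (hg_nonneg : ∀ x ∈ Set.Icc a b, 0 ≤ g x)
    (h : ℝ → ℝ) (hD : DPlus a b h ∨ DMinus a b h)
    (hh_mono : MonotoneOn h (Set.Icc a b))
    (hh_pos : ∀ x ∈ Set.Icc a b, 0 < h x)
    (hgrowth : ∀ x ∈ Set.Icc a b,
      (x - a) ^ (n - k - 1) * h x * ((n - 1).factorial : ℝ) / ((n - k - 1).factorial : ℝ) ≤
        iteratedDerivWithin k f (Set.Icc a b) x) :
    (b - a) * f a ^ (n + 1) * g a ^ n * h a ^ (n - 1) +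
      (∫ x in a..b, f x * g x * h x) ^ n ≤
    ∫ x in a..b, f x ^ (n + 1) * g x ^ n * h x ^ (n - 1) := by
  obtain ⟨M, rfl⟩ : ∃ M, n = M + 2 := ⟨n - 2, by omega⟩
  set d : ℕ → ℝ → ℝ := fun i => iteratedDerivWithin i f (Icc a b)
  have hd0 : d 0 = f := iteratedDerivWithin_zero
  have hd : ∀ i < k, ∀ y ∈ Icc a b, HasDerivWithinAt (d i) (d (i + 1) y) (Icc a b) y :=
    fun i hi y hy => hasDerivWithinAt_iteratedDerivWithin (hf_diff i hi) hy
  have hgrowth' : ∀ y ∈ Icc a b,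
      (y - a) ^ (M + 1 - k) * h y * (M + 1).factorial / (M + 1 - k).factorial ≤ d k y := by
    rw [show M + 1 - k = M + 2 - k - 1 by omega]
    exact hgrowth
  have hh0 : ∀ y ∈ Icc a b, 0 ≤ h y := fun y hy => (hh_pos y hy).le
  have hdk : ∀ i ≤ k, ∀ y ∈ Icc a b, 0 ≤ d i y := by
    intro i hi y hy
    rcases hi.lt_or_eq with hi | rfl
    · exact hf_nonneg i (by omega) y hy
    · exact le_trans (by have := hh0 y hy; have := sub_nonneg.2 hy.1; positivity) (hgrowth' y hy)
  have hf0 : ∀ y ∈ Icc a b, 0 ≤ f y := hd0 ▸ hdk 0 (Nat.zero_le _)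
  have hf' : ∀ y ∈ Icc a b, HasDerivWithinAt f (d 1 y) (Icc a b) y := hd0 ▸ hd 0 hk1
  have hf_cont : ContinuousOn f (Icc a b) := fun y hy => (hf' y hy).continuousWithinAt
  have hf_mono : MonotoneOn f (Icc a b) :=
    monotoneOn_of_hasDerivWithinAt_nonneg (convex_Icc a b) hf_cont
      (fun y hy => (hf' y (interior_subset hy)).mono interior_subset)
      (fun y hy => hdk 1 hk1 y (interior_subset hy))
  have hh_cont : ContinuousOn h (Icc a b) := hD.elim (·.1) (·.1)
  set E := fun t => ∫ s in a..t, f s * h s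
  have hE : ∀ y ∈ Icc a b, HasDerivWithinAt E (f y * h y) (Icc a b) y := fun y hy =>
    hasDerivWithinAt_integral_Icc (hf_cont.mul hh_cont) hy
  have hE0 : E a = 0 := intervalIntegral.integral_same
  have key y (hy : y ∈ Icc a b) := factorial_div_mul_pow_mul_le (N := M + 1) hk2 hd hdk
    (hd0 ▸ hf_mono) (hd0 ▸ hE) hE0 hh_mono hh0 hgrowth' hk1 hy
  simp only [Nat.add_sub_cancel, Nat.factorial_succ, Nat.cast_mul, Nat.cast_add_one,
    mul_div_cancel_right₀ _ (by positivity : (M.factorial : ℝ) ≠ 0)] at key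
  exact sub_mul_add_pow_le_of_hasDerivWithinAt (f := f) (g := g) (h := h) hab.le M hE hE0
    (fun y hy => hasDerivWithinAt_integral_Icc ((hf_cont.mul hg_cont).mul hh_cont) hy)
    intervalIntegral.integral_same
    (fun y hy => hasDerivWithinAt_integral_Icc
      (((hf_cont.pow (M + 3)).mul (hg_cont.pow (M + 2))).mul (hh_cont.pow (M + 1))) hy)
    intervalIntegral.integral_same hf_mono hf0 hg_mono hg_nonneg hh_mono hh0
    fun y hy => mul_pow_le_sub_pow_mul_pow M hE hE0 hf' hf0 (hdk 1 hk1) hh_mono hh0 key hy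

theorem stmt19 (a b : ℝ) (hab : a < b) (n k : ℕ) (hn : 2 ≤ n)
    (hk1 : 1 ≤ k) (hk2 : k ≤ n - 1)
    (f : ℝ → ℝ)
    (hf_diff : ∀ i < k,
      DifferentiableOn ℝ (iteratedDerivWithin i f (Set.Icc a b)) (Set.Icc a b))
    (hf_nonneg : ∀ i ≤ k - 1, ∀ x ∈ Set.Icc a b,
      0 ≤ iteratedDerivWithin i f (Set.Icc a b) x)
    (g : ℝ → ℝ) (hg_cont : ContinuousOn g (Set.Icc a b))
    (hg_mono : MonotoneOn g (Set.Icc a b))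
    (hg_nonneg : ∀ x ∈ Set.Icc a b, 0 ≤ g x)
    (h : ℝ → ℝ) (hD : DPlus a b h ∨ DMinus a b h)
    (hh_mono : MonotoneOn h (Set.Icc a b))
    (hh_pos : ∀ x ∈ Set.Icc a b, 0 < h x)
    (hgrowth : ∀ x ∈ Set.Icc a b,
      (x - a) ^ (n - k - 1) * h x * ((n - 1).factorial : ℝ) / ((n - k - 1).factorial : ℝ) ≤
        iteratedDerivWithin k f (Set.Icc a b) x) :
    (b - a) * f a ^ (n + 1) * g a ^ n * h a ^ (n - 1) +
      (∫ x in a..b, f x * g x * h x) ^ n ≤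
    ∫ x in a..b, f x ^ (n + 1) * g x ^ n * h x ^ (n - 1) :=
  stmt19_general a b hab n k hk1 hk2 f hf_diff hf_nonneg g hg_cont hg_mono hg_nonneg h hD hh_mono
    hh_pos hgrowth
end
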